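/- arXiv:0707.1311 — 8 statements merged into one kernel-verified Lean document; each statement's English description precedes it below -/
import Mathlib

section
/- For all natural numbers ρ and γ with ρ < γ, we have 2·μ(ρ+1, γ) > μ(ρ, γ), where μ(ρ, γ) is defined as the product (2ρ+1)(2ρ+2)···(γ+ρ) divided by (ρ+1)(ρ+2)···γ when ρ < γ, and 1 otherwise. -/
/-- `mu ρ γ = ((2ρ+1)(2ρ+2)⋯(γ+ρ)) / ((ρ+1)(ρ+2)⋯γ)` if `ρ < γ`, and `1` otherwise;
equivalently `(γ+ρ)! ρ! / ((2ρ)! γ!)` when `ρ < γ`. -/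
def mu (ρ γ : ℕ) : ℚ :=
  if ρ < γ then ((γ + ρ).factorial * ρ.factorial : ℚ) / ((2 * ρ).factorial * γ.factorial)
  else 1

/-!
Raising `ρ` by one multiplies `μ(ρ, γ)` by `(γ+ρ+1)(ρ+1) / ((2ρ+1)(2ρ+2)) = (γ+ρ+1) / (2(2ρ+1))`,
and twice this factor exceeds `1` exactly because `γ > ρ`. At the boundary `γ = ρ + 1`, where
`μ(ρ+1, γ) = 1`, the claim reads `μ(ρ, ρ+1) = (2ρ+1)/(ρ+1) < 2`.
-/

lemma mu_pos (ρ γ : ℕ) : 0 < mu ρ γ := by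
  unfold mu
  split_ifs <;> positivity

lemma mu_succ_left {ρ γ : ℕ} (h : ρ + 1 < γ) :
    mu (ρ + 1) γ = (γ + ρ + 1) / (2 * (2 * ρ + 1)) * mu ρ γ := by
  unfold mu
  rw [if_pos h, if_pos (by omega), show γ + (ρ + 1) = γ + ρ + 1 by ring,
    show 2 * (ρ + 1) = 2 * ρ + 1 + 1 by ring]
  simp only [Nat.factorial_succ]
  push_cast
  field_simp
  ring

lemma mu_succ_right_self (ρ : ℕ) : mu ρ (ρ + 1) = (2 * ρ + 1) / (ρ + 1) := by
  unfold mu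
  rw [if_pos (Nat.lt_succ_self ρ), show ρ + 1 + ρ = 2 * ρ + 1 by ring]
  simp only [Nat.factorial_succ]
  push_cast
  field_simp

lemma mu_self (ρ : ℕ) : mu ρ ρ = 1 := if_neg (lt_irrefl ρ)

theorem two_mu_succ_gt (ρ γ : ℕ) (h : ρ < γ) : mu ρ γ < 2 * mu (ρ + 1) γ := by
  rcases (Nat.succ_le_of_lt h).lt_or_eq with hlt | rfl
  · have hρ : (0 : ℚ) < 2 * ρ + 1 := by positivity
    have hγ : (2 * ρ + 1 : ℚ) < γ + ρ + 1 := by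
      have : (ρ : ℚ) < γ := by exact_mod_cast h
      linarith
    calc mu ρ γ < (γ + ρ + 1) / (2 * ρ + 1) * mu ρ γ :=
          lt_mul_of_one_lt_left (mu_pos ρ γ) ((one_lt_div hρ).mpr hγ)
      _ = 2 * mu (ρ + 1) γ := by
          rw [mu_succ_left hlt]
          field_simp
  · rw [mu_succ_right_self, mu_self, div_lt_iff₀ (by positivity)]
    linarith
end

section
/- Let ρ, γ, γ₁ be natural numbers such that 2 ≤ ρ < γ ≤ ρ·γ₁ and ρ − 1 ≤ γ − γ₁. Then 2^ρ·μ(ρ, γ−1) + 2^(ρ−1)·μ(ρ−1, γ−γ₁) < 2^ρ·μ(ρ, γ). -/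
theorem Nat.succ_mul_choose_succ_add (n r : ℕ) :
    (n + 1) * (n + 1 + r).choose r = (n + 1 + r) * (n + r).choose r := by
  have h := Nat.choose_mul_succ_eq (n + r) r
  rw [show n + r + 1 - r = n + 1 by omega, show n + r + 1 = n + 1 + r by omega] at h
  linarith

theorem Nat.add_mul_lt_succ_mul_choose_of_le {n r s c : ℕ} (hs : 0 < s) (hc : 0 < c)
    (h : (n + s) * c ≤ n * (n + r).choose r) :
    (n + 1 + (s + r)) * c < (n + 1) * (n + 1 + r).choose r := by
  rw [Nat.succ_mul_choose_succ_add]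
  refine Nat.lt_of_mul_lt_mul_left (a := n) ?_
  calc n * ((n + 1 + (s + r)) * c) < (n + 1 + r) * ((n + s) * c) := by
        have : 0 < s * (r + 1) * c := by positivity
        nlinarith
    _ ≤ (n + 1 + r) * (n * (n + r).choose r) := Nat.mul_le_mul_left _ h
    _ = n * ((n + 1 + r) * (n + r).choose r) := by ring

theorem Nat.add_mul_mul_choose_le_mul_choose {m r j : ℕ} (hr : 0 < r) (hj : 1 ≤ j) :
    (m + j + r * j) * (m + r).choose r ≤ (m + j) * (m + j + r).choose r := by
  induction j, hj using Nat.le_induction with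
  | base => rw [Nat.succ_mul_choose_succ_add, mul_one, add_right_comm]
  | succ j hj ih =>
    have := Nat.add_mul_lt_succ_mul_choose_of_le (Nat.mul_pos hr (by omega))
      (Nat.choose_pos (by omega)) ih
    rw [← add_assoc, mul_add_one]
    exact this.le

theorem Nat.add_mul_mul_choose_lt_mul_choose {m r j : ℕ} (hr : 0 < r) (hj : 2 ≤ j) :
    (m + j + r * j) * (m + r).choose r < (m + j) * (m + j + r).choose r := by
  obtain ⟨j, rfl⟩ : ∃ i, j = i + 1 := ⟨j - 1, by omega⟩
  have := Nat.add_mul_lt_succ_mul_choose_of_le (Nat.mul_pos hr (by omega))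
    (Nat.choose_pos (by omega)) (Nat.add_mul_mul_choose_le_mul_choose (m := m) hr (j := j) (by omega))
  rwa [← add_assoc, mul_add_one]

theorem Nat.two_mul_add_one_mul_choose_lt {m r j : ℕ} (hr : 0 < r) (hj : 2 ≤ j)
    (h : m + j ≤ (r + 1) * j) :
    (2 * r + 1) * (m + r).choose r < (r + 1) * (m + j + r).choose r := by
  refine Nat.lt_of_mul_lt_mul_left (a := m + j) ?_
  calc (m + j) * ((2 * r + 1) * (m + r).choose r)
      ≤ (r + 1) * ((m + j + r * j) * (m + r).choose r) := by
        have : (m + j) * (2 * r + 1) ≤ (r + 1) * (m + j + r * j) := by nlinarith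
        simpa only [mul_assoc] using Nat.mul_le_mul_right ((m + r).choose r) this
    _ < (r + 1) * ((m + j) * (m + j + r).choose r) :=
        Nat.mul_lt_mul_of_pos_left (Nat.add_mul_mul_choose_lt_mul_choose hr hj) (by omega)
    _ = (m + j) * ((r + 1) * (m + j + r).choose r) := by ring

theorem mu_eq_choose_div_centralBinom {ρ γ : ℕ} (h : ρ ≤ γ) :
    mu ρ γ = (γ + ρ).choose ρ / ρ.centralBinom := by
  rw [Nat.centralBinom_eq_two_mul_choose, Nat.cast_choose ℚ (by omega), Nat.cast_choose ℚ (by omega),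
    Nat.add_sub_cancel, two_mul, Nat.add_sub_cancel, ← two_mul, mu]
  split_ifs with hlt
  · have := γ.factorial_pos; have := ρ.factorial_pos
    field_simp
  · obtain rfl : ρ = γ := by omega
    rw [← two_mul, div_self (by positivity)]

theorem mu_lt_of_le_mul {r m j : ℕ} (hr : 0 < r) (hrm : r ≤ m) (hj : 2 ≤ j)
    (h : m + j ≤ (r + 1) * j) :
    (2 * r + 1) * mu r m < (r + 1) * mu r (m + j) := by
  rw [mu_eq_choose_div_centralBinom hrm, mu_eq_choose_div_centralBinom (by omega), mul_div_assoc',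
    mul_div_assoc']
  refine (div_lt_div_iff_of_pos_right (by exact_mod_cast r.centralBinom_pos)).2 ?_
  exact_mod_cast Nat.two_mul_add_one_mul_choose_lt hr hj h

theorem mu_succ_sub_mu {r n : ℕ} (h : r + 1 ≤ n) :
    2 * (2 * r + 1) * (mu (r + 1) (n + 1) - mu (r + 1) n) = (r + 1) * mu r (n + 1) := by
  rw [mu_eq_choose_div_centralBinom h, mu_eq_choose_div_centralBinom (by omega),
    mu_eq_choose_div_centralBinom (by omega), show n + 1 + (r + 1) = n + 1 + r + 1 by ring,
    Nat.choose_succ_succ', show n + (r + 1) = n + 1 + r by ring]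
  have hcentral : ((r + 1 : ℕ) : ℚ) * (r + 1).centralBinom = 2 * (2 * r + 1) * r.centralBinom := by
    exact_mod_cast Nat.succ_mul_centralBinom_succ r
  have := r.centralBinom_pos; have := (r + 1).centralBinom_pos
  push_cast at hcentral ⊢
  field_simp
  linear_combination -((n + 1 + r).choose r : ℚ) * hcentral

/-- Lemma: if `2 ≤ ρ < γ ≤ ρ·γ₁` and `ρ − 1 ≤ γ − γ₁`, then
`2^ρ·μ(ρ, γ−1) + 2^(ρ−1)·μ(ρ−1, γ−γ₁) < 2^ρ·μ(ρ, γ)`. -/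
theorem mu_numerical_criterion (ρ γ γ₁ : ℕ) (h1 : 2 ≤ ρ) (h2 : ρ < γ) (h3 : γ ≤ ρ * γ₁)
    (h4 : ρ - 1 + γ₁ ≤ γ) :
    (2 : ℚ) ^ ρ * mu ρ (γ - 1) + 2 ^ (ρ - 1) * mu (ρ - 1) (γ - γ₁) < 2 ^ ρ * mu ρ γ := by
  obtain ⟨r, rfl⟩ : ∃ r, ρ = r + 1 := ⟨ρ - 1, by omega⟩
  obtain ⟨m, rfl⟩ : ∃ m, γ = m + γ₁ := ⟨γ - γ₁, by omega⟩
  have hγ₁ : 2 ≤ γ₁ := by nlinarith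
  have hgrowth := mu_lt_of_le_mul (by omega) (by omega) hγ₁ h3
  have hstep := mu_succ_sub_mu (r := r) (n := m + γ₁ - 1) (by omega)
  rw [Nat.sub_add_cancel (by omega)] at hstep
  rw [Nat.add_sub_cancel, Nat.add_sub_cancel]
  have hdiff : mu r m < 2 * (mu (r + 1) (m + γ₁) - mu (r + 1) (m + γ₁ - 1)) :=
    lt_of_mul_lt_mul_left (a := (2 * r + 1 : ℚ)) (by linarith) (by positivity)
  have := mul_lt_mul_of_pos_left hdiff (pow_pos (two_pos (α := ℚ)) r)
  rw [pow_succ]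
  linarith
end

section
/- Let P be a finite partially ordered set with c elements, let 𝒜 be the collection of antichains of P (including the empty set), and let r be the maximum cardinality of an antichain of P. Then |𝒜| ≤ 2^r · μ(r, c). -/
/-!
By Dilworth's theorem `P` is covered by `r` chains `C₀, …, C_{r-1}`. An antichain meets each
chain in at most one point, so there are at most `∏ (|Cᵢ| + 1)` antichains, and by AM–GM this is
at most `((c + r) / r) ^ r`. For `j < r < c` one has `(c + r) / r ≤ 2 (c + 1 + j) / (r + 1 + j)`,
and the product of the right-hand sides over `j < r` is `2 ^ r μ(r, c)`; for `r ≥ c` simply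
`(c + r) / r ≤ 2` and `μ(r, c) = 1`.
-/

open Finset

section Dilworth

variable {α : Type*} [PartialOrder α]

/-- A cover of `s` by `k` chains, encoded by the colouring `f` whose fibres are the chains. -/
def IsChainColoring (s : Finset α) (k : ℕ) (f : α → ℕ) : Prop :=
  (∀ x ∈ s, f x < k) ∧ ∀ x ∈ s, ∀ y ∈ s, f x = f y → x ≤ y ∨ y ≤ x

namespace IsChainColoring

variable {s t A : Finset α} {k : ℕ} {f : α → ℕ}

lemma mono (hf : IsChainColoring s k f) (hts : t ⊆ s) {l : ℕ} (hkl : k ≤ l) :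
    IsChainColoring t l f :=
  ⟨fun x hx => (hf.1 x (hts hx)).trans_le hkl, fun x hx y hy => hf.2 x (hts hx) y (hts hy)⟩

lemma union_of_isChain [DecidableEq α] (hf : IsChainColoring t k f) {K : Finset α}
    (hK : IsChain (· ≤ ·) (K : Set α)) :
    IsChainColoring (t ∪ K) (k + 1) (fun x => if x ∈ K then k else f x) := by
  have hlt : ∀ x ∈ t ∪ K, x ∉ K → f x < k := fun x hx hxK =>
    hf.1 x ((mem_union.1 hx).resolve_right hxK)
  refine ⟨fun x hx => ?_, fun x hx y hy hxy => ?_⟩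
  · dsimp only
    split_ifs with hxK
    exacts [k.lt_succ_self, (hlt x hx hxK).trans k.lt_succ_self]
  by_cases hxK : x ∈ K <;> by_cases hyK : y ∈ K <;> simp only [hxK, hyK, if_true, if_false] at hxy
  · exact hK.total hxK hyK
  · exact absurd hxy (hlt y hy hyK).ne'
  · exact absurd hxy (hlt x hx hxK).ne
  · exact hf.2 x ((mem_union.1 hx).resolve_right hxK) y ((mem_union.1 hy).resolve_right hyK) hxy

lemma isChain_insert_filter_le [DecidableEq α] [DecidableLE α] (hf : IsChainColoring s k f)
    {i : ℕ} {m a : α} (hma : m ≤ a) : IsChain (· ≤ ·) (↑(insert a {x ∈ s | f x = i ∧ x ≤ m}) : Set α) := by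
  rw [coe_insert]
  refine IsChain.insert (fun x hx y hy _ => ?_) fun y hy _ => ?_
  · obtain ⟨hxs, hxi, -⟩ := mem_filter.1 hx
    obtain ⟨hys, hyi, -⟩ := mem_filter.1 hy
    exact hf.2 x hxs y hys (hxi.trans hyi.symm)
  · obtain ⟨-, -, hym⟩ := mem_filter.1 hy
    exact .inr (hym.trans hma)

lemma injOn_of_isAntichain (hf : IsChainColoring s k f) (hAs : A ⊆ s)
    (hA : IsAntichain (· ≤ ·) (A : Set α)) : Set.InjOn f A := by
  intro x hx y hy hxy
  by_contra hne
  exact (hf.2 x (hAs hx) y (hAs hy) hxy).elim (hA hx hy hne) (hA hy hx (Ne.symm hne))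

lemma card_le_of_isAntichain (hf : IsChainColoring s k f) (hAs : A ⊆ s)
    (hA : IsAntichain (· ≤ ·) (A : Set α)) : #A ≤ k :=
  card_range k ▸ card_le_card_of_injOn f (fun x hx => mem_range.2 (hf.1 x (hAs hx)))
    (hf.injOn_of_isAntichain hAs hA)

lemma exists_mem_of_isAntichain_of_card_eq (hf : IsChainColoring s k f) (hAs : A ⊆ s)
    (hA : IsAntichain (· ≤ ·) (A : Set α)) (hAk : #A = k) {i : ℕ} (hi : i < k) :
    ∃ x ∈ A, f x = i := by
  have himage : A.image f = range k := by
    refine eq_of_subset_of_card_le (fun _ hy => ?_) ?_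
    · obtain ⟨x, hx, rfl⟩ := mem_image.1 hy
      exact mem_range.2 (hf.1 x (hAs hx))
    · rw [card_image_of_injOn (hf.injOn_of_isAntichain hAs hA), card_range, hAk]
  exact mem_image.1 (himage ▸ mem_range.2 hi)

lemma exists_top (hf : IsChainColoring s k f)
    (hA : ∃ A ⊆ s, IsAntichain (· ≤ ·) (A : Set α) ∧ #A = k) {i : ℕ} (hi : i < k) :
    ∃ m, (∃ B ⊆ s, IsAntichain (· ≤ ·) (B : Set α) ∧ #B = k ∧ m ∈ B) ∧ f m = i ∧
      ∀ B ⊆ s, IsAntichain (· ≤ ·) (B : Set α) → #B = k → ∃ y ∈ B, f y = i ∧ y ≤ m := by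
  classical
  set D := s.filter fun x => f x = i ∧ ∃ B ⊆ s, IsAntichain (· ≤ ·) (B : Set α) ∧ #B = k ∧ x ∈ B
  have hD : ∀ B ⊆ s, IsAntichain (· ≤ ·) (B : Set α) → #B = k → ∃ y ∈ B, f y = i ∧ y ∈ D := by
    intro B hBs hB hBk
    obtain ⟨y, hyB, hyi⟩ := hf.exists_mem_of_isAntichain_of_card_eq hBs hB hBk hi
    exact ⟨y, hyB, hyi, mem_filter.2 ⟨hBs hyB, hyi, B, hBs, hB, hBk, hyB⟩⟩
  obtain ⟨A, hAs, hA, hAk⟩ := hA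
  obtain ⟨y, -, -, hyD⟩ := hD A hAs hA hAk
  obtain ⟨m, hmD, hmax⟩ := D.exists_maximal ⟨y, hyD⟩
  obtain ⟨hms, hmi, hmB⟩ := mem_filter.1 hmD
  refine ⟨m, hmB, hmi, fun B hBs hB hBk => ?_⟩
  obtain ⟨y, hyB, hyi, hyD⟩ := hD B hBs hB hBk
  refine ⟨y, hyB, hyi, ?_⟩
  rcases hf.2 y (mem_filter.1 hyD).1 m hms (hyi.trans hmi.symm) with hym | hmy
  exacts [hym, hmax hyD hmy]

lemma exists_tops (hf : IsChainColoring s k f)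
    (hA : ∃ A ⊆ s, IsAntichain (· ≤ ·) (A : Set α) ∧ #A = k) :
    ∃ m : Fin k → α, (∀ i, m i ∈ s ∧ f (m i) = i) ∧ IsAntichain (· ≤ ·) (Set.range m) ∧
      ∀ i : Fin k, ∀ B ⊆ s, IsAntichain (· ≤ ·) (B : Set α) → #B = k →
        ∃ y ∈ B, f y = i ∧ y ≤ m i := by
  choose m hmB hmf hmtop using fun i : Fin k => hf.exists_top hA i.2
  refine ⟨m, fun i => ⟨?_, hmf i⟩, ?_, hmtop⟩
  · obtain ⟨B, hBs, -, -, hmB⟩ := hmB i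
    exact hBs hmB
  rintro _ ⟨i, rfl⟩ _ ⟨j, rfl⟩ hne hle
  obtain ⟨B, hBs, hB, hBk, hjB⟩ := hmB j
  obtain ⟨y, hyB, hyi, hyle⟩ := hmtop i B hBs hB hBk
  have hy : y = m j := by
    by_contra h
    exact hB hyB hjB h (hyle.trans hle)
  rw [hy, hmf] at hyi
  exact hne (by rw [Fin.ext hyi])

end IsChainColoring

/-- Galvin's proof of Dilworth's theorem. Remove a maximal element `a`, cover the rest by `k` chains
in the presence of a `k`-antichain, and let `m i` be the top of chain `i` among elements of
`k`-antichains. Either `a` and the `m i` form a `(k + 1)`-antichain, or `m i ≤ a` for some `i`, and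
then deleting the chain formed by `a` and the elements of chain `i` below `m i` leaves no
`k`-antichain. -/
theorem exists_chainColoring_and_antichain (s : Finset α) :
    ∃ k f, IsChainColoring s k f ∧ ∃ A ⊆ s, IsAntichain (· ≤ ·) (A : Set α) ∧ #A = k := by
  classical
  induction s using Finset.strongInduction with | H s ih =>
  obtain rfl | hs := s.eq_empty_or_nonempty
  · exact ⟨0, fun _ => 0, ⟨by simp, by simp⟩, ∅, subset_rfl, by simp, rfl⟩
  obtain ⟨a, ha, hamax⟩ := s.exists_maximal hs
  obtain ⟨k, f, hf, A, hAs, hA, hAk⟩ := ih (s.erase a) (erase_ssubset ha)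
  obtain ⟨m, hm, hmanti, hmtop⟩ := hf.exists_tops ⟨A, hAs, hA, hAk⟩
  by_cases! hcase : ∃ i, m i ≤ a
  · obtain ⟨i, hi⟩ := hcase
    set K := insert a ((s.erase a).filter fun x => f x = i ∧ x ≤ m i)
    have hKs : K ⊆ s := insert_subset ha ((filter_subset _ _).trans (erase_subset _ _))
    have hK : IsChain (· ≤ ·) (K : Set α) := hf.isChain_insert_filter_le hi
    have hsdiff : s \ K ⊆ s.erase a := fun x hx =>
      mem_erase.2 ⟨fun h => (mem_sdiff.1 hx).2 (h ▸ mem_insert_self a _), (mem_sdiff.1 hx).1⟩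
    obtain ⟨l, g, hg, B, hBs, hB, hBl⟩ := ih (s \ K) (sdiff_ssubset hKs (insert_nonempty _ _))
    have hlk : l < k := by
      refine hBl ▸ (hf.card_le_of_isAntichain (hBs.trans hsdiff) hB).lt_of_ne fun hBk => ?_
      obtain ⟨y, hyB, hyi, hym⟩ := hmtop i B (hBs.trans hsdiff) hB hBk
      exact (mem_sdiff.1 (hBs hyB)).2
        (mem_insert_of_mem (mem_filter.2 ⟨hsdiff (hBs hyB), hyi, hym⟩))
    refine ⟨k, fun x => if x ∈ K then k - 1 else g x, ?_, A, hAs.trans (erase_subset _ _), hA, hAk⟩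
    have := (hg.mono subset_rfl (Nat.le_sub_one_of_lt hlk)).union_of_isChain hK
    rwa [sdiff_union_of_subset hKs, Nat.sub_add_cancel i.pos] at this
  · have hminj : Function.Injective m := fun i j h =>
      Fin.ext (by rw [← (hm i).2, ← (hm j).2, h])
    refine ⟨k + 1, fun x => if x ∈ ({a} : Finset α) then k else f x, ?_,
      insert a (univ.image m), ?_, ?_, ?_⟩
    · have := hf.union_of_isChain (K := {a}) (by simp)
      rwa [union_comm, ← insert_eq, insert_erase ha] at this
    · exact insert_subset ha (image_subset_iff.2 fun i _ => erase_subset _ _ (hm i).1)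
    · rw [coe_insert, coe_image, coe_univ, Set.image_univ]
      refine hmanti.insert (by rintro _ ⟨i, rfl⟩ - ; exact hcase i) ?_
      rintro _ ⟨i, rfl⟩ - hle
      exact hcase i (hamax (erase_subset _ _ (hm i).1) hle)
    · rw [card_insert_of_notMem, card_image_of_injective _ hminj, card_univ, Fintype.card_fin]
      intro ha'
      obtain ⟨i, -, hi⟩ := mem_image.1 ha'
      exact (mem_erase.1 (hm i).1).1 hi

theorem exists_chainColoring_of_forall_card_le (s : Finset α) {r : ℕ}
    (hr : ∀ A ⊆ s, IsAntichain (· ≤ ·) (A : Set α) → #A ≤ r) : ∃ f, IsChainColoring s r f := by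
  obtain ⟨k, f, hf, A, hAs, hA, rfl⟩ := exists_chainColoring_and_antichain s
  exact ⟨f, hf.mono subset_rfl (hr A hAs hA)⟩

end Dilworth

lemma card_powerset_filter_card_le_one_le {α : Type*} [DecidableEq α] (C : Finset α) :
    #{B ∈ C.powerset | #B ≤ 1} ≤ #C + 1 := by
  calc #{B ∈ C.powerset | #B ≤ 1} ≤ #(C.powersetCard 0 ∪ C.powersetCard 1) := by
        refine card_le_card fun B hB => ?_
        simp only [mem_filter, mem_powerset, mem_union, mem_powersetCard] at hB ⊢
        obtain ⟨hBC, hB1⟩ := hB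
        exact (Nat.le_one_iff_eq_zero_or_eq_one.1 hB1).imp (⟨hBC, ·⟩) (⟨hBC, ·⟩)
    _ ≤ #C + 1 := (card_union_le _ _).trans (by simp [add_comm])

lemma IsChainColoring.card_antichains_le {α : Type*} [PartialOrder α] [Fintype α] {k : ℕ}
    {f : α → ℕ} (hf : IsChainColoring (univ : Finset α) k f) :
    Nat.card {A : Finset α // IsAntichain (· ≤ ·) (A : Set α)} ≤
      ∏ i ∈ range k, (#{x | f x = i} + 1) := by
  classical
  rw [Nat.card_eq_fintype_card, Fintype.card_subtype]
  calc #{A : Finset α | IsAntichain (· ≤ ·) (A : Set α)}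
      ≤ #((range k).pi fun i => {B ∈ ({x | f x = i} : Finset α).powerset | #B ≤ 1}) := by
        refine card_le_card_of_injOn (fun A i _ => {x ∈ A | f x = i}) (fun A hA => ?_) ?_
        · refine mem_pi.2 fun i _ => mem_filter.2 ⟨?_, card_le_one.2 fun x hx y hy => ?_⟩
          · exact mem_powerset.2 (filter_subset_filter _ (subset_univ A))
          · obtain ⟨hxA, hxi⟩ := mem_filter.1 hx
            obtain ⟨hyA, hyi⟩ := mem_filter.1 hy
            exact hf.injOn_of_isAntichain (subset_univ A) (mem_filter.1 hA).2 hxA hyA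
              (hxi.trans hyi.symm)
        · intro A _ B _ hAB
          ext x
          have := congr_fun₂ hAB (f x) (mem_range.2 (hf.1 x (mem_univ x)))
          simpa using congr(x ∈ $this)
    _ ≤ ∏ i ∈ range k, (#{x | f x = i} + 1) := by
        rw [card_pi]
        exact prod_le_prod' fun i _ => card_powerset_filter_card_le_one_le _

lemma prod_le_sum_div_card_pow {ι : Type*} (s : Finset ι) {z : ι → ℝ} (hz : ∀ i ∈ s, 0 ≤ z i) :
    ∏ i ∈ s, z i ≤ ((∑ i ∈ s, z i) / #s) ^ #s := by
  obtain rfl | hs := s.eq_empty_or_nonempty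
  · simp
  have hn : (#s : ℝ) ≠ 0 := by exact_mod_cast hs.card_pos.ne'
  have hgm := Real.geom_mean_le_arith_mean_weighted s (fun _ => (#s : ℝ)⁻¹) z
    (fun _ _ => by positivity) (by simp [hn]) hz
  rw [Real.finsetProd_rpow s z hz, ← mul_sum, inv_mul_eq_div] at hgm
  calc ∏ i ∈ s, z i = ((∏ i ∈ s, z i) ^ (#s : ℝ)⁻¹) ^ #s :=
        (Real.rpow_inv_natCast_pow (prod_nonneg hz) hs.card_pos.ne').symm
    _ ≤ ((∑ i ∈ s, z i) / #s) ^ #s := pow_le_pow_left₀ (Real.rpow_nonneg (prod_nonneg hz) _) hgm _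

lemma mu_eq_prod {r c : ℕ} (h : r < c) :
    mu r c = ∏ j ∈ range r, ((c : ℚ) + 1 + j) / (r + 1 + j) := by
  have hc := Nat.factorial_mul_ascFactorial c r
  have hr := Nat.factorial_mul_ascFactorial r r
  rw [Nat.ascFactorial_eq_prod_range] at hc hr
  rw [mu, if_pos h, two_mul, ← hc, ← hr, prod_div_distrib]
  push_cast
  field_simp

lemma add_div_pow_le_two_pow_mul_mu (r c : ℕ) :
    (((c : ℝ) + r) / r) ^ r ≤ 2 ^ r * mu r c := by
  rcases lt_or_ge r c with hrc | hcr
  · have hterm : ∀ j ∈ range r, ((c : ℝ) + r) / r ≤ 2 * ((c + 1 + j) / (r + 1 + j)) := by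
      intro j hj
      have hjr : (j : ℝ) + 1 ≤ r := by exact_mod_cast mem_range.1 hj
      have hrc' : (r : ℝ) ≤ c := by exact_mod_cast hrc.le
      rw [div_le_iff₀ (by linarith), mul_comm, ← mul_assoc, ← mul_div_assoc,
        le_div_iff₀ (by positivity)]
      nlinarith [mul_nonneg (sub_nonneg.2 hjr) (sub_nonneg.2 hrc')]
    calc (((c : ℝ) + r) / r) ^ r = ∏ _j ∈ range r, ((c : ℝ) + r) / r := by
          rw [prod_const, card_range]
      _ ≤ ∏ j ∈ range r, 2 * (((c : ℝ) + 1 + j) / (r + 1 + j)) :=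
          prod_le_prod (fun _ _ => by positivity) hterm
      _ = 2 ^ r * mu r c := by simp [prod_mul_distrib, mu_eq_prod hrc]
  · rw [mu, if_neg hcr.not_gt, Rat.cast_one, mul_one]
    refine pow_le_pow_left₀ (by positivity) (div_le_of_le_mul₀ (by positivity) (by norm_num) ?_) r
    have : (c : ℝ) ≤ r := by exact_mod_cast hcr
    linarith

/-- For a nonempty finite poset `P` with `c` elements, if `r` is the maximum cardinality of an
antichain of `P`, then the number of antichains of `P` (including `∅`) is at most `2^r · μ(r, c)`. -/
theorem card_antichains_le (P : Type) [PartialOrder P] [Fintype P] (r : ℕ)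
    (hr_max : ∀ A : Finset P, IsAntichain (· ≤ ·) (A : Set P) → A.card ≤ r) :
    (Nat.card {A : Finset P // IsAntichain (· ≤ ·) (A : Set P)} : ℚ) ≤
      2 ^ r * mu r (Fintype.card P) := by
  obtain ⟨f, hf⟩ := exists_chainColoring_of_forall_card_le univ fun A _ => hr_max A
  have hsum : ∑ i ∈ range r, ((#{x | f x = i} : ℝ) + 1) = Fintype.card P + r := by
    rw [sum_add_distrib, ← Nat.cast_sum,
      ← card_eq_sum_card_fiberwise fun x _ => mem_range.2 (hf.1 x (mem_univ x))]
    simp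
  have hℝ : (Nat.card {A : Finset P // IsAntichain (· ≤ ·) (A : Set P)} : ℝ) ≤
      2 ^ r * mu r (Fintype.card P) :=
    calc _ ≤ ∏ i ∈ range r, ((#{x | f x = i} : ℝ) + 1) := by exact_mod_cast hf.card_antichains_le
      _ ≤ ((Fintype.card P + r) / r) ^ r := by
          simpa [hsum] using prod_le_sum_div_card_pow (range r)
            (z := fun i => (#{x | f x = i} : ℝ) + 1) fun i _ => by positivity
      _ ≤ _ := add_div_pow_le_two_pow_mul_mu r _
  exact_mod_cast hℝ
end

section
/- Let G be a bipartite graph on {x₁,…,x_c} ⊔ {y₁,…,y_c} with x_i y_i an edge for all i, such that the associated directed graph d_G on {1,…,c} (with edge i→j iff x_i y_j is an edge of G) is a poset under reachability. Then a subset A ⊆ {1,…,c} is an antichain of d_G if and only if {x_i y_i : i ∈ A} is a set of pairwise disconnected edges of G. Consequently r(I) = max{|A| : A antichain of d_G}, where r(I) is the maximum size of a set of pairwise disconnected edges of the form considered, and in fact equals the maximum over all sets of pairwise disconnected edges. -/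
/-!
The Herzog–Hibi conditions make the relation `i → j` iff `x_i y_j ∈ E(G)` reflexive and
transitive, so it is its own reachability relation, and for diagonal edges `x_i y_i`, `x_j y_j`
disconnectedness says exactly that `i` and `j` are incomparable.

For an arbitrary set of pairwise disconnected edges, send each edge `x_i y_j` to its `x`-index `i`.
If `x_i y_j` and `x_k y_l` are disconnected, then `x_i y_l` is a non-edge; since `x_k y_l` is an
edge, this rules out both `i = k` and (by transitivity) `i → k`. So the map is injective on the
set and its image is an antichain of the same size.
-/

/-- Edges `vw` and `v'w'` of `G` are disconnected: there are no further edges of `G`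
among the four vertices `v, w, v', w'`. -/
def EdgesDisconnected {W : Type} (G : SimpleGraph W) (v w v' w' : W) : Prop :=
  ¬G.Adj v v' ∧ ¬G.Adj v w' ∧ ¬G.Adj w v' ∧ ¬G.Adj w w'

namespace EdgesDisconnected

variable {W : Type} {G : SimpleGraph W} {v w v' w' : W}

theorem swap_left (h : EdgesDisconnected G v w v' w') : EdgesDisconnected G w v v' w' :=
  ⟨h.2.2.1, h.2.2.2, h.1, h.2.1⟩

theorem swap_right (h : EdgesDisconnected G v w v' w') : EdgesDisconnected G v w w' v' :=
  ⟨h.2.1, h.1, h.2.2.2, h.2.2.1⟩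

end EdgesDisconnected

theorem isAntichain_iff_pairwise_not_and_not {α : Type*} {r : α → α → Prop} {s : Set α} :
    IsAntichain r s ↔ s.Pairwise fun a b => ¬r a b ∧ ¬r b a :=
  ⟨fun h _ ha _ hb hab => ⟨h ha hb hab, h hb ha hab.symm⟩,
    fun h _ ha _ hb hab => (h ha hb hab).1⟩

namespace CMBipartite

open Sum Relation

variable {c : ℕ} {G : SimpleGraph (Fin c ⊕ Fin c)}

abbrev VertexPair (c : ℕ) : Type := (Fin c ⊕ Fin c) × (Fin c ⊕ Fin c)

abbrev dG (G : SimpleGraph (Fin c ⊕ Fin c)) (i j : Fin c) : Prop :=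
  G.Adj (inl i) (inr j)

/-- The index `i` of an edge `x_i y_j` or `y_j x_i` (junk on pairs that are not edges). -/
def xIndex : VertexPair c → Fin c
  | (inl i, _) => i
  | (inr _, inl i) => i
  | (inr _, inr j) => j

def yIndex : VertexPair c → Fin c
  | (inr j, _) => j
  | (inl _, inr j) => j
  | (inl _, inl i) => i

theorem reflTransGen_dG_eq (hrefl : ∀ i, dG G i i)
    (htrans : ∀ i j k, dG G i j → dG G j k → dG G i k) : ReflTransGen (dG G) = dG G := by
  refine funext₂ fun i j => propext ⟨fun h => ?_, ReflTransGen.single⟩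
  induction h with
  | refl => exact hrefl i
  | tail _ hjk ih => exact htrans _ _ _ ih hjk

theorem ne_and_not_dG_of_not_dG (htrans : ∀ i j k, dG G i j → dG G j k → dG G i k)
    {i k l : Fin c} (hkl : dG G k l) (hil : ¬dG G i l) : i ≠ k ∧ ¬dG G i k :=
  ⟨by rintro rfl; exact hil hkl, fun hik => hil (htrans _ _ _ hik hkl)⟩

section Bipartite

variable (hbip : ∀ i j, ¬G.Adj (inl i) (inl j) ∧ ¬G.Adj (inr i) (inr j))
include hbip

theorem edgesDisconnected_diag_iff {i j : Fin c} :
    EdgesDisconnected G (inl i) (inr i) (inl j) (inr j) ↔ ¬dG G i j ∧ ¬dG G j i :=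
  ⟨fun h => ⟨h.2.1, fun hji => h.2.2.1 hji.symm⟩,
    fun h => ⟨(hbip i j).1, h.1, fun hij => h.2 hij.symm, (hbip i j).2⟩⟩

theorem dG_xIndex_yIndex {e : VertexPair c} (he : G.Adj e.1 e.2) :
    dG G (xIndex e) (yIndex e) := by
  rcases e with ⟨a | a, b | b⟩
  · exact absurd he (hbip a b).1
  · exact he
  · exact he.symm
  · exact absurd he (hbip a b).2

theorem edgesDisconnected_normalize {e f : VertexPair c}
    (he : G.Adj e.1 e.2) (hf : G.Adj f.1 f.2) (hef : EdgesDisconnected G e.1 e.2 f.1 f.2) :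
    EdgesDisconnected G (inl (xIndex e)) (inr (yIndex e)) (inl (xIndex f)) (inr (yIndex f)) := by
  rcases e with ⟨a | a, b | b⟩ <;> rcases f with ⟨a' | a', b' | b'⟩ <;>
    first
    | exact absurd he (hbip _ _).1 | exact absurd he (hbip _ _).2
    | exact absurd hf (hbip _ _).1 | exact absurd hf (hbip _ _).2
    | exact hef | exact hef.swap_left | exact hef.swap_right | exact hef.swap_left.swap_right

theorem xIndex_ne_and_not_dG (htrans : ∀ i j k, dG G i j → dG G j k → dG G i k)
    {e f : VertexPair c} (he : G.Adj e.1 e.2) (hf : G.Adj f.1 f.2)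
    (hef : EdgesDisconnected G e.1 e.2 f.1 f.2) :
    xIndex e ≠ xIndex f ∧ ¬dG G (xIndex e) (xIndex f) :=
  ne_and_not_dG_of_not_dG htrans (dG_xIndex_yIndex hbip hf)
    (edgesDisconnected_normalize hbip he hf hef).2.1

theorem isAntichain_iff_pairwise_edgesDisconnected_diag {A : Set (Fin c)} :
    IsAntichain (dG G) A ↔
      A.Pairwise fun i j => EdgesDisconnected G (inl i) (inr i) (inl j) (inr j) := by
  simp only [isAntichain_iff_pairwise_not_and_not, edgesDisconnected_diag_iff hbip]

theorem exists_isAntichain_card_eq (htrans : ∀ i j k, dG G i j → dG G j k → dG G i k)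
    {B : Finset (VertexPair c)} (hedge : ∀ e ∈ B, G.Adj e.1 e.2)
    (hdisc : (B : Set (VertexPair c)).Pairwise fun e f =>
      EdgesDisconnected G e.1 e.2 f.1 f.2) :
    ∃ A : Finset (Fin c), A.card = B.card ∧ IsAntichain (dG G) (A : Set (Fin c)) := by
  have hx : (B : Set (VertexPair c)).Pairwise fun e f =>
      xIndex e ≠ xIndex f ∧ ¬dG G (xIndex e) (xIndex f) := fun e he f hf hne =>
    xIndex_ne_and_not_dG hbip htrans (hedge e he) (hedge f hf) (hdisc he hf hne)
  have hinj : Set.InjOn xIndex (B : Set (VertexPair c)) :=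
    Set.injOn_iff_pairwise_ne.2 (hx.imp fun _ _ => And.left)
  refine ⟨B.image xIndex, Finset.card_image_of_injOn hinj, ?_⟩
  rw [IsAntichain, Finset.coe_image, hinj.pairwise_image]
  exact hx.imp fun _ _ => And.right

end Bipartite

theorem exists_pairwise_edgesDisconnected_card_eq (hrefl : ∀ i, dG G i i) {A : Finset (Fin c)}
    (hA : (A : Set (Fin c)).Pairwise fun i j =>
      EdgesDisconnected G (inl i) (inr i) (inl j) (inr j)) :
    ∃ B : Finset (VertexPair c), B.card = A.card ∧
      (∀ e ∈ B, G.Adj e.1 e.2) ∧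
      (B : Set (VertexPair c)).Pairwise fun e f => EdgesDisconnected G e.1 e.2 f.1 f.2 := by
  have hinj : Function.Injective fun i : Fin c => ((inl i, inr i) : VertexPair c) :=
    fun i j h => inl_injective (congrArg Prod.fst h)
  refine ⟨A.image _, Finset.card_image_of_injective A hinj, ?_, ?_⟩
  · simpa using fun i _ => hrefl i
  · rw [Finset.coe_image, hinj.injOn.pairwise_image]
    exact hA

end CMBipartite

theorem antichain_iff_pairwise_disconnected_general (c : ℕ) (G : SimpleGraph (Fin c ⊕ Fin c))
    (h1 : ∀ i, G.Adj (Sum.inl i) (Sum.inr i))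
    (h3 : ∀ i j k, G.Adj (Sum.inl i) (Sum.inr j) → G.Adj (Sum.inl j) (Sum.inr k) →
      G.Adj (Sum.inl i) (Sum.inr k))
    (hbip : ∀ i j, ¬G.Adj (Sum.inl i) (Sum.inl j) ∧ ¬G.Adj (Sum.inr i) (Sum.inr j)) :
    (∀ A : Finset (Fin c),
      IsAntichain (Relation.ReflTransGen fun i j => G.Adj (Sum.inl i) (Sum.inr j))
          (A : Set (Fin c)) ↔
        (A : Set (Fin c)).Pairwise fun i j =>
          EdgesDisconnected G (Sum.inl i) (Sum.inr i) (Sum.inl j) (Sum.inr j)) ∧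
    (∀ r : ℕ,
      (∃ B : Finset ((Fin c ⊕ Fin c) × (Fin c ⊕ Fin c)),
          B.card = r ∧ (∀ e ∈ B, G.Adj e.1 e.2) ∧
          (B : Set ((Fin c ⊕ Fin c) × (Fin c ⊕ Fin c))).Pairwise fun e f =>
            EdgesDisconnected G e.1 e.2 f.1 f.2) ↔
      (∃ A : Finset (Fin c), A.card = r ∧
        IsAntichain (Relation.ReflTransGen fun i j => G.Adj (Sum.inl i) (Sum.inr j))
          (A : Set (Fin c)))) := by
  rw [CMBipartite.reflTransGen_dG_eq h1 h3]
  refine ⟨fun _ => CMBipartite.isAntichain_iff_pairwise_edgesDisconnected_diag hbip,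
    fun r => ⟨?_, ?_⟩⟩
  · rintro ⟨B, rfl, hedge, hdisc⟩
    exact CMBipartite.exists_isAntichain_card_eq hbip h3 hedge hdisc
  · rintro ⟨A, rfl, hA⟩
    exact CMBipartite.exists_pairwise_edgesDisconnected_card_eq h1
      ((CMBipartite.isAntichain_iff_pairwise_edgesDisconnected_diag hbip).1 hA)

/-- For a Cohen–Macaulay bipartite graph `G` on `{x₁,…,x_c} ⊔ {y₁,…,y_c}` (Herzog–Hibi
conditions; `x_i = Sum.inl i`, `y_j = Sum.inr j`), with associated directed graph `d_G`
on `[c]` (edge `i→j` iff `x_i y_j ∈ E(G)`), which is a poset under reachability: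
a subset `A ⊆ [c]` is an antichain of `d_G` iff `{x_i y_i : i ∈ A}` is pairwise
disconnected in `G`; and there is a set of `r` pairwise disconnected edges of `G` iff
there is an antichain of `d_G` of size `r`. -/
theorem antichain_iff_pairwise_disconnected (c : ℕ) (G : SimpleGraph (Fin c ⊕ Fin c))
    (h1 : ∀ i, G.Adj (Sum.inl i) (Sum.inr i))
    (h2 : ∀ i j, G.Adj (Sum.inl i) (Sum.inr j) → i ≤ j)
    (h3 : ∀ i j k, G.Adj (Sum.inl i) (Sum.inr j) → G.Adj (Sum.inl j) (Sum.inr k) →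
      G.Adj (Sum.inl i) (Sum.inr k))
    (hbip : ∀ i j, ¬G.Adj (Sum.inl i) (Sum.inl j) ∧ ¬G.Adj (Sum.inr i) (Sum.inr j)) :
    (∀ A : Finset (Fin c),
      IsAntichain (Relation.ReflTransGen fun i j => G.Adj (Sum.inl i) (Sum.inr j))
          (A : Set (Fin c)) ↔
        (A : Set (Fin c)).Pairwise fun i j =>
          EdgesDisconnected G (Sum.inl i) (Sum.inr i) (Sum.inl j) (Sum.inr j)) ∧
    (∀ r : ℕ,
      (∃ B : Finset ((Fin c ⊕ Fin c) × (Fin c ⊕ Fin c)),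
          B.card = r ∧ (∀ e ∈ B, G.Adj e.1 e.2) ∧
          (B : Set ((Fin c ⊕ Fin c) × (Fin c ⊕ Fin c))).Pairwise fun e f =>
            EdgesDisconnected G e.1 e.2 f.1 f.2) ↔
      (∃ A : Finset (Fin c), A.card = r ∧
        IsAntichain (Relation.ReflTransGen fun i j => G.Adj (Sum.inl i) (Sum.inr j))
          (A : Set (Fin c)))) :=
  antichain_iff_pairwise_disconnected_general c G h1 h3 hbip
end

section
/- Let G be a Cohen–Macaulay bipartite graph on {x₁,…,x_c} ⊔ {y₁,…,y_c} with associated poset d_G on [c] (i ≤ j iff x_i y_j is an edge or i = j). Then there is a bijection between the antichains of d_G and the minimal vertex covers of G of size c, sending an antichain A to the vertex cover {y_j : j ⪰ i for some i ∈ A} ∪ {x_j : j ⪰̸ i for all i ∈ A}. -/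
/-! The cover attached to an antichain `A` is `{x_j : j ∉ U} ∪ {y_j : j ∈ U}`, where `U` is the
up-set of `d_G` generated by `A`. In a finite poset, `A ↦ U` is a bijection from antichains onto
up-sets, inverted by taking minimal elements. A set `{x_j : j ∉ U} ∪ {y_j : j ∈ U}` is a vertex
cover exactly when `U` is an up-set. Conversely, a vertex cover meets every edge `x_j y_j` of the
perfect matching, so one with `c` vertices contains exactly one endpoint of each, hence has this
shape; for the same reason none of its proper subsets is a cover. -/

open scoped Classical

/-- `C` is a vertex cover of `G`: every edge of `G` has an endpoint in `C`. -/
def IsVertexCover {V : Type} (G : SimpleGraph V) (C : Finset V) : Prop :=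
  ∀ u v, G.Adj u v → u ∈ C ∨ v ∈ C

/-- The map sending an antichain `A` of the poset `d_G` to the vertex cover
`{y_j : j ⪰ i for some i ∈ A} ∪ {x_j : j ⪰̸ i for all i ∈ A}`, where `j ⪰ i` iff
`i = j` or `x_i y_j ∈ E(G)`. -/
noncomputable def coverOfAntichain (c : ℕ) (G : SimpleGraph (Fin c ⊕ Fin c))
    (A : Finset (Fin c)) : Finset (Fin c ⊕ Fin c) :=
  (Finset.univ.filter fun j => ∃ i ∈ A, i = j ∨ G.Adj (Sum.inl i) (Sum.inr j)).image Sum.inr ∪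
  (Finset.univ.filter fun j => ∀ i ∈ A, ¬(i = j ∨ G.Adj (Sum.inl i) (Sum.inr j))).image Sum.inl

open Finset

section UpperClosure

variable {α : Type*} [Fintype α] [PartialOrder α]

theorem coe_filter_exists_le (A : Finset α) :
    ((univ.filter fun j => ∃ i ∈ A, i ≤ j : Finset α) : Set α) = upperClosure (A : Set α) := by
  ext j; simp [mem_upperClosure]

theorem filter_exists_le_bijOn_antichains_upperSets :
    Set.BijOn (fun A : Finset α => univ.filter fun j => ∃ i ∈ A, i ≤ j)
      {A | IsAntichain (· ≤ ·) (A : Set α)} {U | IsUpperSet (U : Set α)} := by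
  refine ⟨fun A _ => ?_, fun A hA B hB hAB => ?_, fun U hU => ?_⟩
  · show IsUpperSet _
    rw [coe_filter_exists_le]
    exact (upperClosure _).upper
  · have h := congrArg (fun U : Finset α => (U : Set α)) hAB
    simp only [coe_filter_exists_le, SetLike.coe_set_eq] at h
    ext x
    rw [← mem_coe, ← mem_coe, ← hA.minimal_mem_upperClosure_iff_mem, h,
      hB.minimal_mem_upperClosure_iff_mem]
  · refine ⟨univ.filter fun i => Minimal (· ∈ U) i, ?_, ?_⟩
    · simpa using setOfPred_minimal_antichain (· ∈ U)
    · ext j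
      simp only [mem_filter, mem_univ, true_and]
      constructor
      · rintro ⟨i, hi, hij⟩
        exact hU hij hi.prop
      · intro hj
        obtain ⟨i, hij, hi⟩ := exists_minimal_le_of_wellFoundedLT (· ∈ U) j hj
        exact ⟨i, hi, hij⟩

end UpperClosure

section BipartiteCover

variable {α : Type} [Preorder α] {G : SimpleGraph (α ⊕ α)}

theorem IsVertexCover.inl_mem_or_inr_mem (hadj : ∀ i j, G.Adj (.inl i) (.inr j) ↔ i ≤ j)
    {C : Finset (α ⊕ α)} (hC : IsVertexCover G C) (i : α) : .inl i ∈ C ∨ .inr i ∈ C :=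
  hC _ _ ((hadj i i).2 le_rfl)

variable [Fintype α]

theorem isVertexCover_compl_disjSum_iff
    (hadj : ∀ i j, G.Adj (.inl i) (.inr j) ↔ i ≤ j)
    (hbip : ∀ i j, ¬G.Adj (.inl i) (.inl j) ∧ ¬G.Adj (.inr i) (.inr j)) (U : Finset α) :
    IsVertexCover G (Uᶜ.disjSum U) ↔ IsUpperSet (U : Set α) := by
  constructor
  · intro hC i j hij hi
    have := hC _ _ ((hadj i j).2 hij)
    simp only [inl_mem_disjSum, inr_mem_disjSum, mem_compl] at this
    exact this.resolve_left (not_not.2 hi)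
  · rintro hU (i | i) (j | j) h
    · exact absurd h (hbip i j).1
    · by_cases hi : i ∈ U
      · simpa using Or.inr (hU ((hadj i j).1 h) hi)
      · simpa using Or.inl hi
    · by_cases hj : j ∈ U
      · simpa using Or.inl (hU ((hadj j i).1 h.symm) hj)
      · simpa using Or.inr hj
    · exact absurd h (hbip i j).2

theorem IsVertexCover.eq_compl_disjSum_of_subset (hadj : ∀ i j, G.Adj (.inl i) (.inr j) ↔ i ≤ j)
    {C : Finset (α ⊕ α)} (hC : IsVertexCover G C) {U : Finset α} (hCU : C ⊆ Uᶜ.disjSum U) :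
    C = Uᶜ.disjSum U := by
  refine hCU.antisymm ?_
  rintro (i | i) hi
  · simp only [inl_mem_disjSum, mem_compl] at hi
    exact (hC.inl_mem_or_inr_mem hadj i).resolve_right fun h => hi (by simpa using hCU h)
  · simp only [inr_mem_disjSum] at hi
    exact (hC.inl_mem_or_inr_mem hadj i).resolve_left fun h => by simpa [hi] using hCU h

theorem IsVertexCover.eq_compl_disjSum_toRight (hadj : ∀ i j, G.Adj (.inl i) (.inr j) ↔ i ≤ j)
    {C : Finset (α ⊕ α)} (hC : IsVertexCover G C) (hcard : #C = Fintype.card α) :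
    C = C.toRightᶜ.disjSum C.toRight := by
  have hsub : C.toRightᶜ ⊆ C.toLeft := fun i hi => by
    simpa [show Sum.inr i ∉ C by simpa using hi] using hC.inl_mem_or_inr_mem hadj i
  have hcard' : #C.toLeft ≤ #C.toRightᶜ := by
    have := C.card_toLeft_add_card_toRight
    rw [card_compl]
    omega
  calc C = C.toLeft.disjSum C.toRight := C.toLeft_disjSum_toRight.symm
    _ = C.toRightᶜ.disjSum C.toRight := by rw [eq_of_subset_of_card_le hsub hcard']

theorem compl_disjSum_bijOn_upperSets_minimal_covers
    (hadj : ∀ i j, G.Adj (.inl i) (.inr j) ↔ i ≤ j)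
    (hbip : ∀ i j, ¬G.Adj (.inl i) (.inl j) ∧ ¬G.Adj (.inr i) (.inr j)) :
    Set.BijOn (fun U : Finset α => Uᶜ.disjSum U) {U | IsUpperSet (U : Set α)}
      {C | IsVertexCover G C ∧ (∀ C' ⊆ C, IsVertexCover G C' → C' = C) ∧
        #C = Fintype.card α} := by
  refine ⟨fun U hU => ?_, fun U _ V _ hUV => ?_, fun C ⟨hC, _, hcard⟩ => ?_⟩
  · refine ⟨(isVertexCover_compl_disjSum_iff hadj hbip U).2 hU,
      fun C' hC' hcov => hcov.eq_compl_disjSum_of_subset hadj hC', ?_⟩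
    rw [card_disjSum, card_compl, Nat.sub_add_cancel (card_le_univ U)]
  · simpa using congrArg toRight hUV
  · refine ⟨C.toRight, ?_, (hC.eq_compl_disjSum_toRight hadj hcard).symm⟩
    rw [hC.eq_compl_disjSum_toRight hadj hcard, isVertexCover_compl_disjSum_iff hadj hbip] at hC
    exact hC

end BipartiteCover

/-- The poset `d_G`. -/
abbrev herzogHibiOrder {c : ℕ} (G : SimpleGraph (Fin c ⊕ Fin c))
    (h2 : ∀ i j, G.Adj (Sum.inl i) (Sum.inr j) → i ≤ j)
    (h3 : ∀ i j k, G.Adj (Sum.inl i) (Sum.inr j) → G.Adj (Sum.inl j) (Sum.inr k) →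
      G.Adj (Sum.inl i) (Sum.inr k)) : PartialOrder (Fin c) where
  le i j := i = j ∨ G.Adj (.inl i) (.inr j)
  lt i j := (i = j ∨ G.Adj (.inl i) (.inr j)) ∧ ¬(j = i ∨ G.Adj (.inl j) (.inr i))
  lt_iff_le_not_ge _ _ := Iff.rfl
  le_refl _ := .inl rfl
  le_trans := by
    rintro i j k (rfl | hij) (rfl | hjk)
    exacts [.inl rfl, .inr hjk, .inr hij, .inr (h3 i j k hij hjk)]
  le_antisymm := by
    rintro i j (rfl | hij) (h | hji)
    exacts [rfl, rfl, h.symm, le_antisymm (h2 i j hij) (h2 j i hji)]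

theorem coverOfAntichain_eq_compl_disjSum (c : ℕ) (G : SimpleGraph (Fin c ⊕ Fin c))
    (A : Finset (Fin c)) :
    coverOfAntichain c G A =
      (univ.filter fun j => ∃ i ∈ A, i = j ∨ G.Adj (.inl i) (.inr j))ᶜ.disjSum
        (univ.filter fun j => ∃ i ∈ A, i = j ∨ G.Adj (.inl i) (.inr j)) := by
  ext (j | j) <;> simp [coverOfAntichain]

/-- For a Cohen–Macaulay bipartite graph `G` on `{x₁,…,x_c} ⊔ {y₁,…,y_c}` (Herzog–Hibi
conditions; `x_i = Sum.inl i`, `y_j = Sum.inr j`), the map `coverOfAntichain` is a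
bijection from the antichains of the poset `d_G` onto the minimal vertex covers of `G`
of size `c`. -/
theorem antichains_biject_minimal_covers (c : ℕ) (G : SimpleGraph (Fin c ⊕ Fin c))
    (h1 : ∀ i, G.Adj (Sum.inl i) (Sum.inr i))
    (h2 : ∀ i j, G.Adj (Sum.inl i) (Sum.inr j) → i ≤ j)
    (h3 : ∀ i j k, G.Adj (Sum.inl i) (Sum.inr j) → G.Adj (Sum.inl j) (Sum.inr k) →
      G.Adj (Sum.inl i) (Sum.inr k))
    (hbip : ∀ i j, ¬G.Adj (Sum.inl i) (Sum.inl j) ∧ ¬G.Adj (Sum.inr i) (Sum.inr j)) :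
    Set.BijOn (coverOfAntichain c G)
      {A : Finset (Fin c) |
        IsAntichain (fun i j => i = j ∨ G.Adj (Sum.inl i) (Sum.inr j)) (A : Set (Fin c))}
      {C : Finset (Fin c ⊕ Fin c) | IsVertexCover G C ∧
        (∀ C' ⊆ C, IsVertexCover G C' → C' = C) ∧ C.card = c} := by
  have hadj : ∀ i j, G.Adj (.inl i) (.inr j) ↔ (herzogHibiOrder G h2 h3).le i j := fun i j =>
    ⟨.inr, by rintro (rfl | h); exacts [h1 i, h]⟩
  have h := (@compl_disjSum_bijOn_upperSets_minimal_covers _ (herzogHibiOrder G h2 h3).toPreorder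
    G _ hadj hbip).comp (@filter_exists_le_bijOn_antichains_upperSets _ _ (herzogHibiOrder G h2 h3))
  rw [Fintype.card_fin] at h
  -- the two sides differ only in their `Decidable` instances
  exact h.congr fun A _ => by rw [Function.comp_apply, coverOfAntichain_eq_compl_disjSum]; congr!
end

section
/- Let I be a square-free monomial ideal in R = k[V] and x ∈ V. If β_{l,σ}(R/(I:x)) ≠ 0 for a square-free multidegree σ, then β_{l,σ}(R/I) ≠ 0 or β_{l,σ∪{x}}(R/I) ≠ 0. Consequently M_l((I:x)) ≤ M_l(I) for all l, where M_l denotes the maximum internal degree of a nonzero Betti number in homological degree l. -/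
open scoped Classical
open MvPolynomial

noncomputable section

variable (k : Type) [Field k] {V : Type} [Fintype V] [LinearOrder V]

/-- `k`-valued chains supported on the faces of `Δ` of cardinality `c`
(so simplices of dimension `c - 1`). -/
abbrev SimplicialChain (Δ : Set (Finset V)) (c : ℤ) : Type :=
  {s : Finset V // s ∈ Δ ∧ (s.card : ℤ) = c} → k

/-- The transpose simplicial boundary map (with the usual signs), from chains on faces of
cardinality `a` to chains on faces of cardinality `b`; it is the simplicial boundary map of the
(augmented, reduced) chain complex of `Δ` when `a = b + 1`, and zero otherwise. -/
def simplicialBoundary (Δ : Set (Finset V)) (a b : ℤ) :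
    SimplicialChain k Δ a →ₗ[k] SimplicialChain k Δ b where
  toFun f t := ∑ x : V,
    if h : x ∉ t.1 ∧ insert x t.1 ∈ Δ ∧ ((insert x t.1).card : ℤ) = a then
      ((-1 : k) ^ ((t.1.filter fun y => y < x).card)) * f ⟨insert x t.1, h.2.1, h.2.2⟩
    else 0
  map_add' f g := by
    funext t
    simp only [Pi.add_apply]
    rw [← Finset.sum_add_distrib]
    refine Finset.sum_congr rfl fun x _ => ?_
    by_cases h : x ∉ t.1 ∧ insert x t.1 ∈ Δ ∧ ((insert x t.1).card : ℤ) = a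
    · simp only [dif_pos h, Pi.add_apply]; ring
    · simp only [dif_neg h]; ring
  map_smul' r f := by
    funext t
    simp only [RingHom.id_apply, Pi.smul_apply, smul_eq_mul, Finset.mul_sum]
    refine Finset.sum_congr rfl fun x _ => ?_
    by_cases h : x ∉ t.1 ∧ insert x t.1 ∈ Δ ∧ ((insert x t.1).card : ℤ) = a
    · simp only [dif_pos h, Pi.smul_apply, smul_eq_mul]; ring
    · simp only [dif_neg h]; ring

/-- The dimension over `k` of the reduced simplicial homology `H̃_d(Δ; k)`, computed as
`dim ker ∂_d − dim (im ∂_{d+1} ∩ ker ∂_d)` in the (augmented) simplicial chain complex of `Δ`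
(chains of dimension `d` live on faces of cardinality `d + 1`). -/
def reducedHomologyRank (Δ : Set (Finset V)) (d : ℤ) : ℕ :=
  Module.finrank k ↥(LinearMap.ker (simplicialBoundary k Δ (d + 1) d)) -
    Module.finrank k ↥(LinearMap.range (simplicialBoundary k Δ (d + 2) (d + 1)) ⊓
      LinearMap.ker (simplicialBoundary k Δ (d + 1) d))

/-- The Stanley–Reisner simplicial complex of a (square-free monomial) ideal `I`:
the faces are the `F ⊆ V` with `∏_{x ∈ F} x ∉ I`. -/
def srComplex (I : Ideal (MvPolynomial V k)) : Set (Finset V) :=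
  {s : Finset V | (∏ x ∈ s, (X x : MvPolynomial V k)) ∉ I}

/-- Restriction `Δ|_σ` of a simplicial complex to a vertex set `σ`. -/
def restrictComplex (Δ : Set (Finset V)) (σ : Finset V) : Set (Finset V) :=
  {s : Finset V | s ∈ Δ ∧ s ⊆ σ}

/-- The multigraded Betti number `β_{l,σ}(R/I)` of a square-free monomial ideal
`I ⊆ R = k[V]`, given by Hochster's formula:
`β_{l,σ}(R/I) = dim_k H̃_{|σ|−l−1}(Δ|_σ; k)`, where `Δ` is the Stanley–Reisner complex of `I`. -/
def multigradedBetti (I : Ideal (MvPolynomial V k)) (l : ℕ) (σ : Finset V) : ℕ :=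
  reducedHomologyRank k (restrictComplex (srComplex k I) σ) ((σ.card : ℤ) - l - 1)

/-- The graded Betti number `β_{l,j}(R/I) = ∑_{|σ| = j} β_{l,σ}(R/I)`. -/
def gradedBetti (I : Ideal (MvPolynomial V k)) (l j : ℕ) : ℕ :=
  ∑ σ ∈ (Finset.univ : Finset V).powersetCard j, multigradedBetti k I l σ

/-- `M_l(I) = max { j : β_{l,j}(R/I) ≠ 0 }`. -/
def maxShift (I : Ideal (MvPolynomial V k)) (l : ℕ) : ℕ :=
  sSup {j : ℕ | gradedBetti k I l j ≠ 0}

/-- `I` is generated by square-free monomials. -/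
def IsSquarefreeMonomialIdeal (I : Ideal (MvPolynomial V k)) : Prop :=
  ∃ 𝒢 : Set (Finset V),
    I = Ideal.span ((fun s : Finset V => ∏ x ∈ s, (X x : MvPolynomial V k)) '' 𝒢)

end

/-!
By Hochster's formula the claim is about the Stanley–Reisner complex `Δ` of `I`. If `x ∉ σ`,
put `Γ = Δ|σ∪{x}`: the complex of `(I : x)` restricted to `σ` is the link of `x` in `Γ`, and
`Δ|σ` is the deletion of `x` from `Γ`. The relative homology of the pair (`Γ`, deletion) is that
of the link shifted by one, so its long exact sequence turns `H̃_d(link) ≠ 0` into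
`H̃_d(deletion) ≠ 0` or `H̃_{d+1}(Γ) ≠ 0`. If `x ∈ σ`, square-freeness makes the complex of
`(I : x)` restricted to `σ` a cone with apex `x`, hence acyclic. The bound on `M_l` follows
because `|σ ∪ {x}| ≥ |σ|`.
-/

open Finset

lemma Submodule.finrank_sub_finrank_inf_ne_zero_iff {K M : Type*} [DivisionRing K]
    [AddCommGroup M] [Module K M] {p q : Submodule K M} [FiniteDimensional K p] :
    Module.finrank K p - Module.finrank K ↥(q ⊓ p) ≠ 0 ↔ ∃ z ∈ p, z ∉ q := by
  constructor
  · intro h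
    by_contra! hpq
    rw [inf_eq_right.mpr hpq, Nat.sub_self] at h
    exact h rfl
  · rintro ⟨z, hzp, hzq⟩
    have hlt : q ⊓ p < p := inf_le_right.lt_of_ne fun h => hzq (h.ge hzp).1
    have := Submodule.finrank_lt_finrank_of_lt hlt
    omega

def linkComplex {V : Type*} [DecidableEq V] (x : V) (Γ : Set (Finset V)) : Set (Finset V) :=
  {s | x ∉ s ∧ insert x s ∈ Γ}

def deletionComplex {V : Type*} (x : V) (Γ : Set (Finset V)) : Set (Finset V) :=
  {s | s ∈ Γ ∧ x ∉ s}

section LowerSet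

variable {V : Type*} {Γ : Set (Finset V)}

lemma IsLowerSet.linkComplex [DecidableEq V] (hΓ : IsLowerSet Γ) (x : V) :
    IsLowerSet (linkComplex x Γ) :=
  fun _ _ hts hs => ⟨fun hx => hs.1 (hts hx), hΓ (insert_subset_insert x hts) hs.2⟩

lemma IsLowerSet.deletionComplex (hΓ : IsLowerSet Γ) (x : V) :
    IsLowerSet (deletionComplex x Γ) :=
  fun _ _ hts hs => ⟨hΓ hts hs.1, fun hx => hs.2 (hts hx)⟩

end LowerSet

namespace FullSimplex

variable {k : Type*} [Field k] {V : Type*}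

-- `Finset V → k` holds the chains of the full simplex on `V` in all dimensions at once;
-- `contract y` and `cone x` are interior and exterior multiplication by the basis vectors of
-- `y` and `x` in the exterior algebra.
variable (k) in
def chainsOn (Δ : Set (Finset V)) (c : ℤ) : Submodule k (Finset V → k) where
  carrier := {g | ∀ s, g s ≠ 0 → s ∈ Δ ∧ (#s : ℤ) = c}
  add_mem' {g g'} hg hg' s hs := by
    by_cases h : g s = 0
    · exact hg' s (by simpa [h] using hs)
    · exact hg s h
  zero_mem' _ hs := absurd rfl hs
  smul_mem' _ _ hg s hs := hg s (right_ne_zero_of_mul hs)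

variable {Δ Λ Γ : Set (Finset V)} {c : ℤ} {g : Finset V → k}

lemma chainsOn_mono (h : Λ ⊆ Γ) : chainsOn k Λ c ≤ chainsOn k Γ c :=
  fun _ hg s hs => (hg s hs).imp_left (@h s)

variable [LinearOrder V]

variable (k) in
def insertSign (x : V) (s : Finset V) : k := (-1) ^ #{y ∈ s | y < x}

lemma insertSign_mul_self (x : V) (s : Finset V) : insertSign k x s * insertSign k x s = 1 := by
  rw [insertSign, ← pow_add]
  exact Even.neg_one_pow ⟨_, rfl⟩

lemma insertSign_insert {x y : V} {s : Finset V} (hy : y ∉ s) :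
    insertSign k x (insert y s) = (if y < x then -1 else 1) * insertSign k x s := by
  rw [insertSign, insertSign, filter_insert]
  split_ifs with hyx
  · rw [card_insert_of_notMem (fun h => hy (mem_of_mem_filter _ h)), pow_succ, mul_comm]
  · rw [one_mul]

lemma insertSign_insert_mul_insertSign_insert {x y : V} {s : Finset V} (hxy : x ≠ y)
    (hx : x ∉ s) (hy : y ∉ s) :
    insertSign k y (insert x s) * insertSign k x (insert y s) =
      -(insertSign k x s * insertSign k y s) := by
  rw [insertSign_insert hx, insertSign_insert hy]
  rcases hxy.lt_or_gt with h | h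
  · rw [if_pos h, if_neg h.asymm]; ring
  · rw [if_neg h.asymm, if_pos h]; ring

lemma insertSign_mul_insertSign_insert {x y : V} {s : Finset V} (hxy : x ≠ y)
    (hx : x ∉ s) (hy : y ∉ s) :
    insertSign k x s * insertSign k y (insert x s) =
      -(insertSign k y s * insertSign k x (insert y s)) := by
  rw [insertSign_insert hx, insertSign_insert hy]
  rcases hxy.lt_or_gt with h | h
  · rw [if_pos h, if_neg h.asymm]; ring
  · rw [if_neg h.asymm, if_pos h]; ring

variable (k)

def contract (y : V) : (Finset V → k) →ₗ[k] Finset V → k where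
  toFun g t := if y ∈ t then 0 else insertSign k y t * g (insert y t)
  map_add' g g' := by ext t; dsimp only [Pi.add_apply]; split_ifs <;> ring
  map_smul' c g := by
    ext t; simp only [Pi.smul_apply, smul_eq_mul, RingHom.id_apply]; split_ifs <;> ring

def cone (x : V) : (Finset V → k) →ₗ[k] Finset V → k where
  toFun g t := if x ∈ t then insertSign k x (t.erase x) * g (t.erase x) else 0
  map_add' g g' := by ext t; dsimp only [Pi.add_apply]; split_ifs <;> ring
  map_smul' c g := by
    ext t; simp only [Pi.smul_apply, smul_eq_mul, RingHom.id_apply]; split_ifs <;> ring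

def boundary [Fintype V] : (Finset V → k) →ₗ[k] Finset V → k := ∑ y, contract k y

variable {k}

lemma contract_apply (y : V) (g : Finset V → k) (t : Finset V) :
    contract k y g t = if y ∈ t then 0 else insertSign k y t * g (insert y t) := rfl

lemma cone_apply (x : V) (g : Finset V → k) (t : Finset V) :
    cone k x g t = if x ∈ t then insertSign k x (t.erase x) * g (t.erase x) else 0 := rfl

lemma boundary_eq_sum [Fintype V] (g : Finset V → k) : boundary k g = ∑ y, contract k y g :=
  LinearMap.sum_apply _ _ _

lemma contract_contract_self (y : V) (g : Finset V → k) : contract k y (contract k y g) = 0 := by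
  ext t
  simp [contract_apply]

lemma contract_contract_of_ne {x y : V} (hxy : x ≠ y) (g : Finset V → k) :
    contract k x (contract k y g) = -contract k y (contract k x g) := by
  ext t
  by_cases hx : x ∈ t
  · simp [contract_apply, hx]
  by_cases hy : y ∈ t
  · simp [contract_apply, hy]
  have hsign := insertSign_mul_insertSign_insert (k := k) hxy hx hy
  simp only [contract_apply, Pi.neg_apply, mem_insert, hx, hy, hxy, hxy.symm, or_self,
    if_false, insert_comm x y t]
  linear_combination g (insert y (insert x t)) * hsign

lemma contract_self_cone_add (x : V) (g : Finset V → k) :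
    contract k x (cone k x g) + cone k x (contract k x g) = g := by
  ext t
  by_cases hx : x ∈ t
  · simp [contract_apply, cone_apply, hx, ← mul_assoc, insertSign_mul_self]
  · simp [contract_apply, cone_apply, hx, ← mul_assoc, insertSign_mul_self]

lemma contract_cone_add_of_ne {x y : V} (hyx : y ≠ x) (g : Finset V → k) :
    contract k y (cone k x g) + cone k x (contract k y g) = 0 := by
  ext t
  by_cases hx : x ∈ t
  · obtain ⟨s, hxs, rfl⟩ : ∃ s, x ∉ s ∧ t = insert x s :=
      ⟨t.erase x, notMem_erase x t, (insert_erase hx).symm⟩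
    by_cases hy : y ∈ s
    · simp [contract_apply, cone_apply, hy, hxs]
    have hsign := insertSign_insert_mul_insertSign_insert (k := k) hyx.symm hxs hy
    simp [contract_apply, cone_apply, hy, hxs, hyx, erase_insert_of_ne hyx, erase_insert hxs]
    linear_combination g (insert y s) * hsign
  · simp [contract_apply, cone_apply, hx, Ne.symm hyx]

lemma contract_boundary [Fintype V] (x : V) (g : Finset V → k) :
    contract k x (boundary k g) = -boundary k (contract k x g) := by
  rw [boundary_eq_sum, boundary_eq_sum, map_sum, ← Finset.sum_neg_distrib]
  refine Finset.sum_congr rfl fun y _ => ?_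
  rcases eq_or_ne x y with rfl | hxy
  · rw [contract_contract_self, neg_zero]
  · exact contract_contract_of_ne hxy g

lemma boundary_cone_add_cone_boundary [Fintype V] (x : V) (g : Finset V → k) :
    boundary k (cone k x g) + cone k x (boundary k g) = g := by
  have h y : contract k y (cone k x g) + cone k x (contract k y g) = if y = x then g else 0 := by
    split_ifs with hyx
    · exact hyx ▸ contract_self_cone_add y g
    · exact contract_cone_add_of_ne hyx g
  rw [boundary_eq_sum, boundary_eq_sum, map_sum, ← Finset.sum_add_distrib]
  simp only [h, Finset.sum_ite_eq', Finset.mem_univ, if_true]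

lemma contract_mem_chainsOn {y : V} (h : ∀ s, y ∉ s → insert y s ∈ Γ → s ∈ Λ)
    (hg : g ∈ chainsOn k Γ (c + 1)) : contract k y g ∈ chainsOn k Λ c := by
  intro s hs
  rw [contract_apply] at hs
  split_ifs at hs with hys
  · exact absurd rfl hs
  obtain ⟨hΓ, hcard⟩ := hg _ (right_ne_zero_of_mul hs)
  rw [card_insert_of_notMem hys] at hcard
  exact ⟨h s hys hΓ, by omega⟩

lemma contract_eq_zero_of_mem_chainsOn {x : V} (h : ∀ s ∈ Δ, x ∉ s)
    (hg : g ∈ chainsOn k Δ c) : contract k x g = 0 := by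
  ext s
  rw [contract_apply]
  split_ifs with hxs
  · rfl
  · by_contra hne
    exact h _ (hg _ (right_ne_zero_of_mul hne)).1 (mem_insert_self x s)

lemma contract_cone_of_mem_chainsOn {x : V} (h : ∀ s ∈ Δ, x ∉ s)
    (hg : g ∈ chainsOn k Δ c) : contract k x (cone k x g) = g := by
  simpa [contract_eq_zero_of_mem_chainsOn h hg] using contract_self_cone_add x g

lemma cone_mem_chainsOn {x : V} (h : ∀ s ∈ Λ, insert x s ∈ Γ)
    (hg : g ∈ chainsOn k Λ c) : cone k x g ∈ chainsOn k Γ (c + 1) := by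
  intro t ht
  rw [cone_apply] at ht
  split_ifs at ht with hxt
  swap
  · exact absurd rfl ht
  obtain ⟨hΛ, hcard⟩ := hg _ (right_ne_zero_of_mul ht)
  refine ⟨insert_erase hxt ▸ h _ hΛ, ?_⟩
  rw [← insert_erase hxt, card_insert_of_notMem (notMem_erase x t)]
  omega

lemma boundary_mem_chainsOn [Fintype V] (hΔ : IsLowerSet Δ) (hg : g ∈ chainsOn k Δ (c + 1)) :
    boundary k g ∈ chainsOn k Δ c := by
  rw [boundary_eq_sum]
  exact Submodule.sum_mem _ fun y _ =>
    contract_mem_chainsOn (fun s _ hs => hΔ (subset_insert y s) hs) hg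

end FullSimplex

open FullSimplex

namespace SimplicialChain

variable {k : Type} [Field k] {V : Type} {Δ : Set (Finset V)}

noncomputable def extendByZero (Δ : Set (Finset V)) (c : ℤ) :
    SimplicialChain k Δ c →ₗ[k] Finset V → k where
  toFun f s := if h : s ∈ Δ ∧ (#s : ℤ) = c then f ⟨s, h⟩ else 0
  map_add' f f' := by ext s; dsimp only [Pi.add_apply]; split_ifs <;> simp
  map_smul' a f := by
    ext s; simp only [Pi.smul_apply, smul_eq_mul, RingHom.id_apply]; split_ifs <;> simp

lemma extendByZero_apply_coe {c : ℤ} (f : SimplicialChain k Δ c) (t) :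
    extendByZero Δ c f t.1 = f t :=
  dif_pos t.2

lemma extendByZero_mem_chainsOn {c : ℤ} (f : SimplicialChain k Δ c) :
    extendByZero Δ c f ∈ chainsOn k Δ c := by
  intro s hs
  by_contra h
  exact hs (dif_neg h)

lemma extendByZero_injective {c : ℤ} : Function.Injective (extendByZero (k := k) Δ c) :=
  fun f f' h => funext fun t => by simpa only [extendByZero_apply_coe] using congrFun h t.1

lemma extendByZero_restrict {c : ℤ} {g : Finset V → k} (hg : g ∈ chainsOn k Δ c) :
    extendByZero Δ c (fun t => g t.1) = g := by
  ext s
  by_cases h : s ∈ Δ ∧ (#s : ℤ) = c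
  · exact dif_pos h
  · rw [extendByZero, LinearMap.coe_mk, AddHom.coe_mk, dif_neg h]
    by_contra hs
    exact h (hg s (Ne.symm hs))

variable [Fintype V] [LinearOrder V]

lemma simplicialBoundary_apply {a b : ℤ} (f : SimplicialChain k Δ a) (t) :
    simplicialBoundary k Δ a b f t = boundary k (extendByZero Δ a f) t.1 := by
  rw [boundary_eq_sum, Finset.sum_apply]
  refine Finset.sum_congr rfl fun x _ => ?_
  by_cases hx : x ∈ t.1 <;>
    simp [contract_apply, extendByZero, insertSign, hx]

lemma extendByZero_simplicialBoundary (hΔ : IsLowerSet Δ) {a b : ℤ} (hab : a = b + 1)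
    (f : SimplicialChain k Δ a) :
    extendByZero Δ b (simplicialBoundary k Δ a b f) = boundary k (extendByZero Δ a f) := by
  subst hab
  rw [← extendByZero_restrict (boundary_mem_chainsOn hΔ (extendByZero_mem_chainsOn f))]
  exact congrArg _ (funext (simplicialBoundary_apply f))

end SimplicialChain

section Homology

open SimplicialChain

variable {k : Type} [Field k] {V : Type} [Fintype V] [LinearOrder V]

lemma reducedHomologyRank_ne_zero_iff {Δ : Set (Finset V)} (hΔ : IsLowerSet Δ) (d : ℤ) :
    reducedHomologyRank k Δ d ≠ 0 ↔ ∃ z ∈ chainsOn k Δ (d + 1),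
      boundary k z = 0 ∧ ∀ w ∈ chainsOn k Δ (d + 1 + 1), boundary k w ≠ z := by
  rw [reducedHomologyRank, show d + 2 = d + 1 + 1 by ring,
    Submodule.finrank_sub_finrank_inf_ne_zero_iff]
  constructor
  · rintro ⟨f, hf, hf_nb⟩
    refine ⟨extendByZero Δ _ f, extendByZero_mem_chainsOn f, ?_, fun w hw hwf => hf_nb ?_⟩
    · rw [← extendByZero_simplicialBoundary hΔ rfl, LinearMap.mem_ker.mp hf, map_zero]
    · refine ⟨fun t => w t.1, extendByZero_injective ?_⟩
      rw [extendByZero_simplicialBoundary hΔ rfl, extendByZero_restrict hw, hwf]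
  · rintro ⟨z, hz, hz_cycle, hz_nb⟩
    refine ⟨fun t => z t.1, LinearMap.mem_ker.mpr (extendByZero_injective ?_), ?_⟩
    · rw [extendByZero_simplicialBoundary hΔ rfl, extendByZero_restrict hz, hz_cycle, map_zero]
    · rintro ⟨f, hf⟩
      refine hz_nb _ (extendByZero_mem_chainsOn f) ?_
      rw [← extendByZero_simplicialBoundary hΔ rfl, hf, extendByZero_restrict hz]

lemma reducedHomologyRank_eq_zero_of_isCone {Δ : Set (Finset V)} (hΔ : IsLowerSet Δ) {x : V}
    (hcone : ∀ s ∈ Δ, insert x s ∈ Δ) (d : ℤ) : reducedHomologyRank k Δ d = 0 := by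
  by_contra h
  obtain ⟨z, hz, hz_cycle, hz_nb⟩ := (reducedHomologyRank_ne_zero_iff hΔ d).mp h
  refine hz_nb (cone k x z) (cone_mem_chainsOn hcone hz) ?_
  simpa [hz_cycle] using boundary_cone_add_cone_boundary x z

/-- Long exact sequence of the pair (Γ, deletion) at the chain level: a cycle `z` of the link
that bounds `w` in the deletion gives the cycle `w - cone z` of `Γ`, and its `x`-part `-z` shows
that it cannot bound in `Γ`. -/
lemma reducedHomologyRank_linkComplex_ne_zero {Γ : Set (Finset V)} (hΓ : IsLowerSet Γ) (x : V)
    (d : ℤ) (h : reducedHomologyRank k (linkComplex x Γ) d ≠ 0) :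
    reducedHomologyRank k (deletionComplex x Γ) d ≠ 0 ∨
      reducedHomologyRank k Γ (d + 1) ≠ 0 := by
  have hlink_del : linkComplex x Γ ⊆ deletionComplex x Γ :=
    fun s hs => ⟨hΓ (subset_insert x s) hs.2, hs.1⟩
  have hdel_sub : deletionComplex x Γ ⊆ Γ := fun s hs => hs.1
  have hdel_x : ∀ s ∈ deletionComplex x Γ, x ∉ s := fun s hs => hs.2
  have hlink_x : ∀ s ∈ linkComplex x Γ, x ∉ s := fun s hs => hs.1
  obtain ⟨z, hz, hz_cycle, hz_nb⟩ :=
    (reducedHomologyRank_ne_zero_iff (hΓ.linkComplex x) d).mp h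
  rw [reducedHomologyRank_ne_zero_iff (hΓ.deletionComplex x),
    reducedHomologyRank_ne_zero_iff hΓ]
  by_cases hbounds : ∃ w ∈ chainsOn k (deletionComplex x Γ) (d + 1 + 1), boundary k w = z
  swap
  · push Not at hbounds
    exact .inl ⟨z, chainsOn_mono hlink_del hz, hz_cycle, hbounds⟩
  obtain ⟨w, hw, rfl⟩ := hbounds
  have hcone : cone k x (boundary k w) ∈ chainsOn k Γ (d + 1 + 1) :=
    cone_mem_chainsOn (fun s hs => hs.2) hz
  refine .inr ⟨w - cone k x (boundary k w), ?_, ?_, fun u hu hu_eq => ?_⟩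
  · exact sub_mem (chainsOn_mono hdel_sub hw) hcone
  · have hbc : boundary k (cone k x (boundary k w)) = boundary k w := by
      simpa [hz_cycle] using boundary_cone_add_cone_boundary x (boundary k w)
    rw [map_sub, hbc, sub_self]
  · have hxpart : contract k x (w - cone k x (boundary k w)) = -boundary k w := by
      rw [map_sub, contract_eq_zero_of_mem_chainsOn hdel_x hw,
        contract_cone_of_mem_chainsOn hlink_x hz, zero_sub]
    refine hz_nb (contract k x u) (contract_mem_chainsOn (fun s hs h => ⟨hs, h⟩) hu) ?_
    rw [← neg_neg (boundary k _), ← contract_boundary, hu_eq, hxpart, neg_neg]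

end Homology

section StanleyReisner

variable {k : Type} [Field k] {V : Type}

lemma isLowerSet_srComplex (I : Ideal (MvPolynomial V k)) : IsLowerSet (srComplex k I) :=
  fun _ _ hts hs hmem => hs (I.mem_of_dvd (prod_dvd_prod_of_subset _ _ _ hts) hmem)

lemma IsLowerSet.restrictComplex {Δ : Set (Finset V)} (hΔ : IsLowerSet Δ) (σ : Finset V) :
    IsLowerSet (restrictComplex Δ σ) :=
  fun _ _ hts hs => ⟨hΔ hts hs.1, hts.trans hs.2⟩

lemma prod_X_eq_monomial (t : Finset V) :
    ∏ y ∈ t, (X y : MvPolynomial V k) = monomial (Finsupp.indicator t fun _ _ => 1) 1 := by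
  simpa using prod_X_pow (R := k) (fun _ => 1) t

lemma IsSquarefreeMonomialIdeal.X_mul_prod_X_mem_iff {I : Ideal (MvPolynomial V k)}
    (hI : IsSquarefreeMonomialIdeal k I) {x : V} {t : Finset V} (hx : x ∈ t) :
    X x * ∏ y ∈ t, X y ∈ I ↔ ∏ y ∈ t, X y ∈ I := by
  obtain ⟨𝒢, rfl⟩ := hI
  have hgen : (fun s : Finset V => ∏ y ∈ s, (X y : MvPolynomial V k)) '' 𝒢 =
      (fun m => monomial m 1) '' ((fun s => Finsupp.indicator s fun _ _ => 1) '' 𝒢) := by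
    rw [Set.image_image]
    exact Set.image_congr fun s _ => prod_X_eq_monomial s
  rw [hgen, prod_X_eq_monomial, X, monomial_mul, one_mul, mem_ideal_span_monomial_image,
    mem_ideal_span_monomial_image, support_monomial, support_monomial]
  simp only [one_ne_zero, if_false, mem_singleton, forall_eq, Set.exists_mem_image]
  refine exists_congr fun g => and_congr_right fun _ => ?_
  simp only [Finsupp.le_def, Finsupp.add_apply, Finsupp.single_apply, Finsupp.indicator_apply]
  refine forall_congr' fun z => ?_
  by_cases hz : z ∈ t <;> by_cases hzx : x = z <;> by_cases hzg : z ∈ g <;> simp_all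

lemma mem_srComplex_colon {I : Ideal (MvPolynomial V k)} {x : V} {s : Finset V} :
    s ∈ srComplex k (I.colon (Ideal.span {(X x : MvPolynomial V k)})) ↔
      X x * ∏ y ∈ s, X y ∉ I := by
  rw [srComplex, Set.mem_ofPred_eq, Ideal.mem_colon_span_singleton, mul_comm]

variable [DecidableEq V]

lemma restrictComplex_eq_deletionComplex {Δ : Set (Finset V)} {x : V} {σ : Finset V}
    (hx : x ∉ σ) :
    restrictComplex Δ σ = deletionComplex x (restrictComplex Δ (insert x σ)) := by
  ext s
  exact ⟨fun hs => ⟨⟨hs.1, hs.2.trans (subset_insert x σ)⟩, fun hxs => hx (hs.2 hxs)⟩,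
    fun hs => ⟨hs.1.1, (subset_insert_iff_of_notMem hs.2).mp hs.1.2⟩⟩

lemma restrictComplex_srComplex_colon_eq_linkComplex {I : Ideal (MvPolynomial V k)} {x : V}
    {σ : Finset V} (hx : x ∉ σ) :
    restrictComplex (srComplex k (I.colon (Ideal.span {(X x : MvPolynomial V k)}))) σ =
      linkComplex x (restrictComplex (srComplex k I) (insert x σ)) := by
  ext s
  constructor
  · rintro ⟨hs, hsσ⟩
    have hxs : x ∉ s := fun h => hx (hsσ h)
    refine ⟨hxs, ?_, insert_subset_insert x hsσ⟩
    show ∏ y ∈ insert x s, X y ∉ I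
    rw [prod_insert hxs]
    exact mem_srComplex_colon.mp hs
  · rintro ⟨hxs, hs, hsσ⟩
    refine ⟨mem_srComplex_colon.mpr ?_,
      (subset_insert_iff_of_notMem hxs).mp ((subset_insert x s).trans hsσ)⟩
    rw [← prod_insert hxs]
    exact hs

lemma IsSquarefreeMonomialIdeal.insert_mem_restrictComplex_srComplex_colon
    {I : Ideal (MvPolynomial V k)} (hI : IsSquarefreeMonomialIdeal k I) {x : V} {σ : Finset V}
    (hx : x ∈ σ) {s : Finset V}
    (hs : s ∈
      restrictComplex (srComplex k (I.colon (Ideal.span {(X x : MvPolynomial V k)}))) σ) :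
    insert x s ∈
      restrictComplex (srComplex k (I.colon (Ideal.span {(X x : MvPolynomial V k)}))) σ := by
  by_cases hxs : x ∈ s
  · rwa [insert_eq_of_mem hxs]
  refine ⟨mem_srComplex_colon.mpr fun h => mem_srComplex_colon.mp hs.1 ?_,
    insert_subset hx hs.2⟩
  rwa [hI.X_mul_prod_X_mem_iff (mem_insert_self x s), prod_insert hxs] at h

end StanleyReisner

section Betti

variable {k : Type} [Field k] {V : Type} [Fintype V] [LinearOrder V]

lemma IsSquarefreeMonomialIdeal.multigradedBetti_ne_zero_of_colon {I : Ideal (MvPolynomial V k)}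
    (hI : IsSquarefreeMonomialIdeal k I) (x : V) {l : ℕ} {σ : Finset V}
    (h : multigradedBetti k (I.colon (Ideal.span {(X x : MvPolynomial V k)})) l σ ≠ 0) :
    multigradedBetti k I l σ ≠ 0 ∨ multigradedBetti k I l (insert x σ) ≠ 0 := by
  unfold multigradedBetti at h ⊢
  by_cases hxσ : x ∈ σ
  · refine absurd (reducedHomologyRank_eq_zero_of_isCone ?_
      (fun s hs => hI.insert_mem_restrictComplex_srComplex_colon hxσ hs) _) h
    exact (isLowerSet_srComplex _).restrictComplex σ
  rw [restrictComplex_srComplex_colon_eq_linkComplex hxσ] at h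
  rw [restrictComplex_eq_deletionComplex hxσ, card_insert_of_notMem hxσ,
    show ((#σ + 1 : ℕ) : ℤ) - l - 1 = (#σ : ℤ) - l - 1 + 1 by push_cast; ring]
  exact reducedHomologyRank_linkComplex_ne_zero ((isLowerSet_srComplex I).restrictComplex _) x _ h

lemma le_maxShift {I : Ideal (MvPolynomial V k)} {l : ℕ} {σ : Finset V}
    (h : multigradedBetti k I l σ ≠ 0) : #σ ≤ maxShift k I l := by
  refine le_csSup ⟨Fintype.card V, fun j hj => ?_⟩ fun h0 => ?_
  · by_contra! hlt
    exact hj (by rw [gradedBetti, powersetCard_eq_empty.mpr (by simpa using hlt), sum_empty])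
  · exact h (sum_eq_zero_iff.mp h0 σ (mem_powersetCard_univ.mpr rfl))

lemma maxShift_le {I : Ideal (MvPolynomial V k)} {l m : ℕ}
    (h : ∀ σ, multigradedBetti k I l σ ≠ 0 → #σ ≤ m) : maxShift k I l ≤ m := by
  refine csSup_le' fun j hj => ?_
  obtain ⟨σ, hσ, hne⟩ := exists_ne_zero_of_sum_ne_zero hj
  exact mem_powersetCard_univ.mp hσ ▸ h σ hne

end Betti

/-- Let `I` be a square-free monomial ideal in `R = k[V]` and `x ∈ V`. If
`β_{l,σ}(R/(I:x)) ≠ 0` for a square-free multidegree `σ`, then `β_{l,σ}(R/I) ≠ 0` or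
`β_{l,σ∪{x}}(R/I) ≠ 0`. Consequently `M_l((I:x)) ≤ M_l(I)` for all `l`. -/
theorem betti_colon (k : Type) [Field k] (V : Type) [Fintype V] [LinearOrder V]
    (I : Ideal (MvPolynomial V k)) (hI : IsSquarefreeMonomialIdeal k I) (x : V) :
    (∀ (l : ℕ) (σ : Finset V),
      multigradedBetti k (I.colon (Ideal.span {(X x : MvPolynomial V k)})) l σ ≠ 0 →
        multigradedBetti k I l σ ≠ 0 ∨ multigradedBetti k I l (insert x σ) ≠ 0) ∧
    (∀ l : ℕ, maxShift k (I.colon (Ideal.span {(X x : MvPolynomial V k)})) l ≤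
      maxShift k I l) := by
  refine ⟨fun l σ h => hI.multigradedBetti_ne_zero_of_colon x h,
    fun l => maxShift_le fun σ h => ?_⟩
  rcases hI.multigradedBetti_ne_zero_of_colon x h with hσ | hxσ
  · exact le_maxShift hσ
  · exact (card_le_card (subset_insert x σ)).trans (le_maxShift hxσ)
end

section
/- Let G be a bipartite graph on V₁ ⊔ V₂ with edge ideal I of height c, such that for every vertex x, height(I, x) = c. Then for every vertex x, height(I : x) = c as well. -/
/-!
A minimum vertex cover `C` of a bipartite graph can be matched into its complement. By Hall's
theorem it suffices that `|S| ≤ |N(S) \ C|` for `S ⊆ C`; for `S` inside one side of the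
bipartition this holds since otherwise `(C \ S) ∪ (N(S) \ C)` would be a smaller cover, and a
general `S` splits into its two sides, whose outer neighbourhoods are disjoint.

The `|C|` edges of this matching are disjoint, so a cover of size `|C|` consists of exactly one
endpoint of each. Since every vertex lies in such a cover, the matching is perfect, and as each
of its edges has one end in each side, `|V₁| = |V₂| = |C|`. Then `V₂` and `V₁` are minimum
covers omitting any given vertex of `V₁`, resp. `V₂`.
-/

open Finset

def IsMinVertexCover {V : Type} (G : SimpleGraph V) (C : Finset V) : Prop :=
  IsVertexCover G C ∧ ∀ D, IsVertexCover G D → #C ≤ #D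

section

variable {V : Type} {G : SimpleGraph V}

theorem SimpleGraph.IsBipartiteWith.isIndepSet_left {s t : Set V} (h : G.IsBipartiteWith s t) :
    G.IsIndepSet s := fun _ hu _ hv _ huv =>
  h.disjoint.notMem_of_mem_left hv (h.mem_of_mem_adj hu huv)

theorem SimpleGraph.IsBipartiteWith.isIndepSet_compl_left {s t : Set V}
    (h : G.IsBipartiteWith s t) : G.IsIndepSet sᶜ := fun _ hu _ hv _ huv => by
  rcases h.mem_of_adj huv with ⟨hu', -⟩ | ⟨-, hv'⟩
  exacts [hu hu', hv hv']

theorem SimpleGraph.IsBipartiteWith.isVertexCover_left {s t : Finset V}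
    (h : G.IsBipartiteWith s t) : IsVertexCover G s := fun _ _ huv =>
  (h.mem_of_adj huv).imp And.left And.right

theorem IsVertexCover.sdiff_union [DecidableEq V] {C S T : Finset V} (hC : IsVertexCover G C)
    (hS : G.IsIndepSet S) (hT : ∀ u ∈ S, ∀ v, G.Adj u v → v ∉ C → v ∈ T) :
    IsVertexCover G (C \ S ∪ T) := by
  intro u v huv
  have hcov := hC u v huv
  have hnot_both : ¬(u ∈ S ∧ v ∈ S) := fun ⟨hu, hv⟩ => hS hu hv (G.ne_of_adj huv) huv
  have hTv : u ∈ S → v ∉ C → v ∈ T := fun hu => hT u hu v huv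
  have hTu : v ∈ S → u ∉ C → u ∈ T := fun hv => hT v hv u huv.symm
  simp only [mem_union, mem_sdiff]
  tauto

theorem IsMinVertexCover.card_le_card_biUnion_sdiff [Fintype V] [DecidableEq V]
    [DecidableRel G.Adj] {C S : Finset V} (hC : IsMinVertexCover G C) (hSC : S ⊆ C)
    (hS : G.IsIndepSet S) : #S ≤ #(S.biUnion fun u => G.neighborFinset u \ C) := by
  set T := S.biUnion fun u => G.neighborFinset u \ C
  have hcov : IsVertexCover G (C \ S ∪ T) := hC.1.sdiff_union hS fun u hu v huv hvC =>
    mem_biUnion.2 ⟨u, hu, mem_sdiff.2 ⟨(G.mem_neighborFinset u v).2 huv, hvC⟩⟩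
  have hmin := hC.2 _ hcov
  have hunion := card_union_le (C \ S) T
  have hsdiff := card_sdiff_of_subset hSC
  have hSC_card := card_le_card hSC
  omega

theorem IsMinVertexCover.card_le_card_biUnion_sdiff_of_isBipartiteWith [Fintype V]
    [DecidableEq V] [DecidableRel G.Adj] {s t : Set V} {C S : Finset V}
    (hG : G.IsBipartiteWith s t) (hC : IsMinVertexCover G C) (hSC : S ⊆ C) :
    #S ≤ #(S.biUnion fun u => G.neighborFinset u \ C) := by
  classical
  set N : Finset V → Finset V := fun S' => S'.biUnion fun u => G.neighborFinset u \ C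
  set S₁ := S.filter (· ∈ s)
  set S₂ := S.filter (· ∉ s)
  have h₁ : #S₁ ≤ #(N S₁) := hC.card_le_card_biUnion_sdiff ((filter_subset _ _).trans hSC)
    (hG.isIndepSet_left.mono fun v hv => (mem_filter.1 hv).2)
  have h₂ : #S₂ ≤ #(N S₂) := hC.card_le_card_biUnion_sdiff ((filter_subset _ _).trans hSC)
    (hG.isIndepSet_compl_left.mono fun v hv => (mem_filter.1 hv).2)
  have hdisj : Disjoint (N S₁) (N S₂) := by
    rw [disjoint_left]
    intro v hv₁ hv₂
    simp only [N, S₁, S₂, mem_biUnion, mem_filter, mem_sdiff, SimpleGraph.mem_neighborFinset]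
      at hv₁ hv₂
    obtain ⟨u, ⟨-, hu⟩, huv, -⟩ := hv₁
    obtain ⟨w, ⟨-, hw⟩, hwv, -⟩ := hv₂
    exact hG.disjoint.notMem_of_mem_right (hG.mem_of_mem_adj hu huv)
      ((hG.mem_of_adj hwv).resolve_left fun h => hw h.1).2
  calc #S = #S₁ + #S₂ := (card_filter_add_card_filter_not _).symm
    _ ≤ #(N S₁) + #(N S₂) := add_le_add h₁ h₂
    _ = #(N S₁ ∪ N S₂) := (card_union_of_disjoint hdisj).symm
    _ = #(N S) := by rw [← union_biUnion, filter_union_filter_not_eq]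

theorem IsMinVertexCover.exists_injOn_adj_notMem [Fintype V] {s t : Set V} {C : Finset V}
    (hG : G.IsBipartiteWith s t) (hC : IsMinVertexCover G C) :
    ∃ m : V → V, Set.InjOn m C ∧ ∀ x ∈ C, G.Adj x (m x) ∧ m x ∉ C := by
  classical
  obtain ⟨f, hf_inj, hf⟩ := (all_card_le_biUnion_card_iff_exists_injective
    fun x : C => G.neighborFinset x \ C).1 fun A => by
      simpa [image_biUnion, card_image_of_injective _ Subtype.val_injective] using
        hC.card_le_card_biUnion_sdiff_of_isBipartiteWith hG (S := A.image Subtype.val)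
          fun v hv => by
            obtain ⟨x, -, rfl⟩ := mem_image.1 hv
            exact x.2
  refine ⟨fun v => if h : v ∈ C then f ⟨v, h⟩ else v, fun x hx y hy hxy => ?_, fun x hx => ?_⟩
  · simp only [mem_coe] at hx hy
    simp only [hx, hy, dite_true] at hxy
    exact congrArg Subtype.val (hf_inj hxy)
  · simpa [hx] using hf ⟨x, hx⟩

theorem IsVertexCover.subset_union_image_of_card_le [DecidableEq V] {C D : Finset V} {m : V → V}
    (hm : Set.InjOn m C) (hmC : ∀ x ∈ C, G.Adj x (m x) ∧ m x ∉ C) (hD : IsVertexCover G D)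
    (hDC : #D ≤ #C) : D ⊆ C ∪ C.image m := by
  let φ : V → V := fun x => if x ∈ D then x else m x
  have hmaps : Set.MapsTo φ C D := fun x hx => by
    by_cases hxD : x ∈ D
    · simp [φ, hxD]
    · simpa [φ, hxD] using (hD x (m x) (hmC x hx).1).resolve_left hxD
  have hinj : Set.InjOn φ C := fun x hx y hy hxy => by
    by_cases hxD : x ∈ D <;> by_cases hyD : y ∈ D <;>
      simp only [φ, hxD, hyD, if_true, if_false] at hxy
    · exact hxy
    · exact absurd (hxy ▸ hx) (hmC y hy).2
    · exact absurd (hxy ▸ hy) (hmC x hx).2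
    · exact hm hx hy hxy
  intro v hv
  obtain ⟨x, hx, rfl⟩ := surjOn_of_injOn_of_card_le φ hmaps hinj hDC hv
  by_cases hxD : x ∈ D
  · simp only [φ, hxD, if_true]
    exact mem_union_left _ hx
  · simp only [φ, hxD, if_false]
    exact mem_union_right _ (mem_image_of_mem m hx)

theorem SimpleGraph.IsIndepSet.card_le_of_subset_union_image [DecidableEq V] {s C : Finset V}
    {m : V → V} (hs : G.IsIndepSet s) (hadj : ∀ x ∈ C, G.Adj x (m x))
    (hsub : s ⊆ C ∪ C.image m) : #s ≤ #C :=
  card_le_card_of_surjOn (fun x => if x ∈ s then x else m x) fun v hv => by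
    rcases mem_union.1 (hsub hv) with hvC | hvm
    · exact ⟨v, hvC, if_pos hv⟩
    · obtain ⟨x, hx, rfl⟩ := mem_image.1 hvm
      have hxs : x ∉ s := fun hxs => hs hxs hv (G.ne_of_adj (hadj x hx)) (hadj x hx)
      exact ⟨x, hx, if_neg hxs⟩

end

theorem colon_height_eq_general (V : Type) [Fintype V] [DecidableEq V] (G : SimpleGraph V)
    (V₁ V₂ : Finset V)
    (hpart : ∀ v : V, (v ∈ V₁ ∧ v ∉ V₂) ∨ (v ∈ V₂ ∧ v ∉ V₁))
    (hbip : ∀ u v, G.Adj u v → (u ∈ V₁ ∧ v ∈ V₂) ∨ (u ∈ V₂ ∧ v ∈ V₁))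
    (c : ℕ)
    (hcex : ∃ C : Finset V, IsVertexCover G C ∧ C.card = c)
    (hcmin : ∀ C : Finset V, IsVertexCover G C → c ≤ C.card)
    (hyp : ∀ x : V, ∃ C : Finset V, IsVertexCover G C ∧ C.card = c ∧ x ∈ C) :
    V₁.card = c ∧ V₂.card = c ∧
      ∀ x : V, ∃ C : Finset V, IsVertexCover G C ∧ C.card = c ∧ x ∉ C := by
  obtain ⟨C, hC, rfl⟩ := hcex
  have hG : G.IsBipartiteWith V₁ V₂ :=
    ⟨Set.disjoint_left.2 fun v h₁ h₂ => (hpart v).elim (fun h => h.2 h₂) (fun h => h.2 h₁), hbip⟩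
  obtain ⟨m, hm_inj, hm⟩ := IsMinVertexCover.exists_injOn_adj_notMem hG ⟨hC, hcmin⟩
  have hcovered : univ ⊆ C ∪ C.image m := fun v _ => by
    obtain ⟨D, hD, hDC, hvD⟩ := hyp v
    exact hD.subset_union_image_of_card_le hm_inj hm hDC.le hvD
  have hcard : ∀ {s t : Finset V}, G.IsBipartiteWith s t → #s = #C := fun h =>
    le_antisymm
      (h.isIndepSet_left.card_le_of_subset_union_image (fun x hx => (hm x hx).1)
        ((subset_univ _).trans hcovered))
      (hcmin _ h.isVertexCover_left)
  refine ⟨hcard hG, hcard hG.symm, fun x => ?_⟩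
  rcases hpart x with ⟨-, hx⟩ | ⟨-, hx⟩
  exacts [⟨V₂, hG.symm.isVertexCover_left, hcard hG.symm, hx⟩,
    ⟨V₁, hG.isVertexCover_left, hcard hG, hx⟩]

/-- Let `G` be a bipartite graph on `V₁ ⊔ V₂` without isolated vertices, with edge ideal `I` of
height `c` (i.e. minimum vertex-cover size `c`). If `height (I, x) = c` for every vertex `x`
(i.e. every vertex lies in some vertex cover of size `c`), then `height (I : x) = c` for every
vertex `x` as well (i.e. every vertex `x` is omitted by some vertex cover of size `c` — such a
cover necessarily contains all neighbours of `x`); moreover `|V₁| = |V₂| = c`. -/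
theorem colon_height_eq (V : Type) [Fintype V] [DecidableEq V] (G : SimpleGraph V)
    (V₁ V₂ : Finset V)
    (hpart : ∀ v : V, (v ∈ V₁ ∧ v ∉ V₂) ∨ (v ∈ V₂ ∧ v ∉ V₁))
    (hbip : ∀ u v, G.Adj u v → (u ∈ V₁ ∧ v ∈ V₂) ∨ (u ∈ V₂ ∧ v ∈ V₁))
    (hniso : ∀ v : V, ∃ w, G.Adj v w)
    (c : ℕ)
    (hcex : ∃ C : Finset V, IsVertexCover G C ∧ C.card = c)
    (hcmin : ∀ C : Finset V, IsVertexCover G C → c ≤ C.card)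
    (hyp : ∀ x : V, ∃ C : Finset V, IsVertexCover G C ∧ C.card = c ∧ x ∈ C) :
    V₁.card = c ∧ V₂.card = c ∧
      ∀ x : V, ∃ C : Finset V, IsVertexCover G C ∧ C.card = c ∧ x ∉ C :=
  colon_height_eq_general V G V₁ V₂ hpart hbip c hcex hcmin hyp
end

section
/- Let G be a Cohen–Macaulay bipartite graph on {x₁,…,x_c} ⊔ {y₁,…,y_c} (satisfying the Herzog–Hibi conditions) and let 𝐛 be a set of pairwise disconnected edges of G. Then there exists a set A ⊆ {1,…,c} with |A| = |𝐛| such that {x_i y_i : i ∈ A} is a set of pairwise disconnected edges of G. -/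
namespace EdgesDisconnected

theorem congr_sym2 {W : Type} {G : SimpleGraph W} {a b c d a' b' c' d' : W}
    (hab : s(a, b) = s(a', b')) (hcd : s(c, d) = s(c', d')) :
    EdgesDisconnected G a b c d ↔ EdgesDisconnected G a' b' c' d' := by
  rw [Sym2.eq_iff] at hab hcd
  unfold EdgesDisconnected
  rcases hab with ⟨rfl, rfl⟩ | ⟨rfl, rfl⟩ <;> rcases hcd with ⟨rfl, rfl⟩ | ⟨rfl, rfl⟩ <;>
    tauto

end EdgesDisconnected

section

variable {α : Type} {G : SimpleGraph (α ⊕ α)}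

theorem exists_sym2_eq_inl_inr_of_adj
    (hbip : ∀ i j, ¬G.Adj (.inl i) (.inl j) ∧ ¬G.Adj (.inr i) (.inr j)) {a b : α ⊕ α}
    (hab : G.Adj a b) : ∃ i j, G.Adj (.inl i) (.inr j) ∧ s(a, b) = s(.inl i, .inr j) := by
  rcases a with i | j <;> rcases b with k | l
  · exact absurd hab (hbip i k).1
  · exact ⟨i, l, hab, rfl⟩
  · exact ⟨k, j, hab.symm, Sym2.eq_swap⟩
  · exact absurd hab (hbip j l).2

theorem EdgesDisconnected.inr_ne {i j k l : α} (hij : G.Adj (.inl i) (.inr j))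
    (hd : EdgesDisconnected G (.inl i) (.inr j) (.inl k) (.inr l)) : j ≠ l := by
  rintro rfl
  exact hd.2.1 hij

theorem EdgesDisconnected.matching_at_inr
    (hbip : ∀ i j, ¬G.Adj (.inl i) (.inl j) ∧ ¬G.Adj (.inr i) (.inr j))
    (htrans : ∀ i j k, G.Adj (.inl i) (.inr j) → G.Adj (.inl j) (.inr k) →
      G.Adj (.inl i) (.inr k))
    {i j k l : α} (hij : G.Adj (.inl i) (.inr j)) (hkl : G.Adj (.inl k) (.inr l))
    (hd : EdgesDisconnected G (.inl i) (.inr j) (.inl k) (.inr l)) :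
    EdgesDisconnected G (.inl j) (.inr j) (.inl l) (.inr l) :=
  ⟨(hbip j l).1, fun h => hd.2.1 (htrans i j l hij h),
    fun h => hd.2.2.1 (htrans k l j hkl h.symm).symm, (hbip j l).2⟩

end

theorem pairwise_disconnected_to_matching_edges_general (c : ℕ) (G : SimpleGraph (Fin c ⊕ Fin c))
    (h3 : ∀ i j k, G.Adj (Sum.inl i) (Sum.inr j) → G.Adj (Sum.inl j) (Sum.inr k) →
      G.Adj (Sum.inl i) (Sum.inr k))
    (hbip : ∀ i j, ¬G.Adj (Sum.inl i) (Sum.inl j) ∧ ¬G.Adj (Sum.inr i) (Sum.inr j))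
    (B : Finset ((Fin c ⊕ Fin c) × (Fin c ⊕ Fin c)))
    (hBadj : ∀ e ∈ B, G.Adj e.1 e.2)
    (hBdisc : (B : Set ((Fin c ⊕ Fin c) × (Fin c ⊕ Fin c))).Pairwise fun e f =>
      EdgesDisconnected G e.1 e.2 f.1 f.2) :
    ∃ A : Finset (Fin c), A.card = B.card ∧
      (A : Set (Fin c)).Pairwise fun i j =>
        EdgesDisconnected G (Sum.inl i) (Sum.inr i) (Sum.inl j) (Sum.inr j) := by
  choose x y hxy hsym using fun e : B => exists_sym2_eq_inl_inr_of_adj hbip (hBadj e e.2)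
  have hdisc (e f : B) (hef : e ≠ f) :
      EdgesDisconnected G (.inl (x e)) (.inr (y e)) (.inl (x f)) (.inr (y f)) :=
    (EdgesDisconnected.congr_sym2 (hsym e) (hsym f)).1
      (hBdisc e.2 f.2 (Subtype.coe_injective.ne hef))
  have hinj : Function.Injective y := fun e f hyef => by
    by_contra hef
    exact (hdisc e f hef).inr_ne (hxy e) hyef
  refine ⟨B.attach.image y, ?_, ?_⟩
  · rw [Finset.card_image_of_injective _ hinj, Finset.card_attach]
  rw [Finset.coe_image]
  rintro _ ⟨e, -, rfl⟩ _ ⟨f, -, rfl⟩ hyef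
  exact (hdisc e f (ne_of_apply_ne y hyef)).matching_at_inr hbip h3 (hxy e) (hxy f)

/-- Let `G` be a Cohen–Macaulay bipartite graph on `{x₁,…,x_c} ⊔ {y₁,…,y_c}`
(Herzog–Hibi conditions; `x_i = Sum.inl i`, `y_j = Sum.inr j`), and let `B` be a set of
pairwise disconnected edges of `G`. Then there is `A ⊆ [c]` with `|A| = |B|` such that
`{x_i y_i : i ∈ A}` is a set of pairwise disconnected edges of `G`. -/
theorem pairwise_disconnected_to_matching_edges (c : ℕ) (G : SimpleGraph (Fin c ⊕ Fin c))
    (h1 : ∀ i, G.Adj (Sum.inl i) (Sum.inr i))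
    (h2 : ∀ i j, G.Adj (Sum.inl i) (Sum.inr j) → i ≤ j)
    (h3 : ∀ i j k, G.Adj (Sum.inl i) (Sum.inr j) → G.Adj (Sum.inl j) (Sum.inr k) →
      G.Adj (Sum.inl i) (Sum.inr k))
    (hbip : ∀ i j, ¬G.Adj (Sum.inl i) (Sum.inl j) ∧ ¬G.Adj (Sum.inr i) (Sum.inr j))
    (B : Finset ((Fin c ⊕ Fin c) × (Fin c ⊕ Fin c)))
    (hBadj : ∀ e ∈ B, G.Adj e.1 e.2)
    (hBdisc : (B : Set ((Fin c ⊕ Fin c) × (Fin c ⊕ Fin c))).Pairwise fun e f =>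
      EdgesDisconnected G e.1 e.2 f.1 f.2) :
    ∃ A : Finset (Fin c), A.card = B.card ∧
      (A : Set (Fin c)).Pairwise fun i j =>
        EdgesDisconnected G (Sum.inl i) (Sum.inr i) (Sum.inl j) (Sum.inr j) :=
  pairwise_disconnected_to_matching_edges_general c G h3 hbip B hBadj hBdisc
end
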